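/- arXiv:1906.09759 — 7 statements merged into one kernel-verified Lean document; each statement's English description precedes it below -/
import Mathlib

section
/- Every 2r-regular multigraph (loops allowed, with each loop contributing degree 2) admits a decomposition of its edge set into r spanning 2-regular subgraphs (2-factors). More generally, for every integer k with 1 ≤ k ≤ r, every 2r-regular multigraph has a spanning 2k-regular subgraph. -/
/-!
Orient the edges so that at every vertex the in-degree equals the out-degree, hence both equal
`r`. Such an orientation is found by splitting off: at a vertex `v` with a non-loop edge, even
degree supplies two edges `v–u`, `v–w`; replace them by one edge `u–w`, orient the smaller
multigraph, and reroute the arc between `u` and `w` through `v`. The arcs, read as a bipartite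
multigraph from out-copies to in-copies of the vertices, have all row and column sums `r`, so
Hall's theorem peels off `r` permutations `σ`. Forgetting orientations, each `σ` gives the
2-factor with edges `x–σ x`, and any `k` of these factors sum to a `2k`-factor.
-/

namespace Multigraph

open Finset

section Edges

variable {V : Type*} [DecidableEq V]

def edge (u w : V) : V → V → ℕ :=
  fun x y => if x = u ∧ y = w ∨ x = w ∧ y = u then 1 else 0

def arc (u w : V) : V → V → ℕ := fun x y => if x = u ∧ y = w then 1 else 0

/-- `d x y` counts arcs from `x` to `y`; a loop `d x x` is kept as a loop, so it contributes
one to both the out- and the in-degree of `x`. -/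
def underlying : (V → V → ℕ) →+ V → V → ℕ where
  toFun d x y := if x = y then d x x else d x y + d y x
  map_zero' := by ext; simp
  map_add' d d' := by ext x y; by_cases h : x = y <;> simp [h, add_add_add_comm]

theorem underlying_apply (d : V → V → ℕ) (x y : V) :
    underlying d x y = if x = y then d x x else d x y + d y x := rfl

theorem underlying_apply_comm (d : V → V → ℕ) (x y : V) :
    underlying d x y = underlying d y x := by
  by_cases h : x = y
  · rw [h]
  · simp [underlying_apply, h, Ne.symm h, add_comm]

theorem underlying_arc (u w : V) : underlying (arc u w) = edge u w := by
  ext x y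
  by_cases x = y <;> simp [underlying_apply, arc, edge] <;> grind

theorem edge_comm (u w : V) : edge u w = edge w u := by
  ext x y; simp only [edge, or_comm]

theorem edge_apply_comm (u w x y : V) : edge u w x y = edge u w y x := by
  simp only [edge]; grind

theorem underlying_eq_self {m : V → V → ℕ} (h : ∀ u v, u ≠ v → m u v = 0) :
    underlying m = m := by
  ext x y
  by_cases hxy : x = y
  · simp [underlying_apply, hxy]
  · simp [underlying_apply, hxy, h x y hxy, h y x (Ne.symm hxy)]

theorem exists_eq_add_edge {m : V → V → ℕ} (hsym : ∀ x y, m x y = m y x) {u w : V}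
    (h : 0 < m u w) : ∃ m', m = m' + edge u w ∧ ∀ x y, m' x y = m' y x := by
  have hle : edge u w ≤ m := fun x y => by
    simp only [edge]; split_ifs with hxy
    · rcases hxy with ⟨rfl, rfl⟩ | ⟨rfl, rfl⟩ <;> grind
    · exact Nat.zero_le _
  obtain ⟨m', rfl⟩ := exists_add_of_le hle
  refine ⟨m', add_comm _ _, fun x y => ?_⟩
  have := hsym x y
  simp only [Pi.add_apply, edge_apply_comm u w x y] at this
  omega

theorem exists_eq_add_arc_of_pos {d : V → V → ℕ} {u w : V} (h : 0 < d u w) :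
    ∃ d', d = d' + arc u w := by
  have hle : arc u w ≤ d := fun x y => by
    simp only [arc]; split_ifs with hxy
    · rwa [hxy.1, hxy.2]
    · exact Nat.zero_le _
  obtain ⟨d', rfl⟩ := exists_add_of_le hle
  exact ⟨d', add_comm _ _⟩

theorem exists_eq_add_arc_of_underlying_pos {d : V → V → ℕ} {u w : V}
    (h : 0 < underlying d u w) : ∃ d', d = d' + arc u w ∨ d = d' + arc w u := by
  by_cases huw : u = w
  · subst huw
    simp only [underlying_apply, if_true] at h
    obtain ⟨d', hd'⟩ := exists_eq_add_arc_of_pos h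
    exact ⟨d', Or.inl hd'⟩
  · simp only [underlying_apply, huw, if_false] at h
    rcases Nat.eq_zero_or_pos (d u w) with h0 | hpos
    · obtain ⟨d', hd'⟩ := exists_eq_add_arc_of_pos (show 0 < d w u by omega)
      exact ⟨d', Or.inr hd'⟩
    · obtain ⟨d', hd'⟩ := exists_eq_add_arc_of_pos hpos
      exact ⟨d', Or.inl hd'⟩

end Edges

section Degrees

variable {V : Type*} [Fintype V]

def degree : (V → V → ℕ) →+ V → ℕ where
  toFun m v := ∑ u, m v u + m v v
  map_zero' := by ext; simp
  map_add' m m' := by ext v; simp only [Pi.add_apply, sum_add_distrib]; ring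

theorem degree_apply (m : V → V → ℕ) (v : V) : degree m v = ∑ u, m v u + m v v := rfl

variable [DecidableEq V]

theorem degree_underlying (d : V → V → ℕ) (v : V) :
    degree (underlying d) v = ∑ u, d v u + ∑ u, d u v := by
  have key : ∀ u, underlying d v u + (if u = v then d v v else 0) = d v u + d u v := by
    intro u
    by_cases h : u = v
    · simp [underlying_apply, h]
    · simp [underlying_apply, h, Ne.symm h]
  have := sum_congr rfl fun u (_ : u ∈ univ) => key u
  rw [sum_add_distrib, sum_ite_eq', sum_add_distrib] at this
  simpa [degree_apply, underlying_apply] using this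

theorem degree_edge (u w x : V) :
    degree (edge u w) x = (if x = u then 1 else 0) + (if x = w then 1 else 0) := by
  rw [← underlying_arc, degree_underlying]
  simp [arc, ite_and]

theorem sum_degree_edge (u w : V) : ∑ x, degree (edge u w) x = 2 := by
  simp [degree_edge, sum_add_distrib]

theorem exists_ne_pos_of_odd_degree {m : V → V → ℕ} {v : V} (h : Odd (degree m v)) :
    ∃ w, v ≠ w ∧ 0 < m v w := by
  by_contra! hloops
  have : ∑ u, m v u = m v v :=
    sum_eq_single v (fun u _ hu => Nat.le_zero.mp (hloops u (Ne.symm hu))) (by simp)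
  rw [degree_apply, this, ← two_mul] at h
  exact Nat.not_odd_iff_even.mpr (even_two_mul _) h

theorem exists_split_off {m : V → V → ℕ} (hsym : ∀ x y, m x y = m y x) {v u : V}
    (heven : Even (degree m v)) (hvu : v ≠ u) (h : 0 < m v u) :
    ∃ w m', m = m' + edge v u + edge v w ∧ ∀ x y, m' x y = m' y x := by
  obtain ⟨m₁, rfl, hsym₁⟩ := exists_eq_add_edge hsym h
  have hodd : Odd (degree m₁ v) := by
    simpa [degree_edge, hvu, Nat.even_add_one] using heven
  obtain ⟨w, -, hw⟩ := exists_ne_pos_of_odd_degree hodd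
  obtain ⟨m', rfl, hsym'⟩ := exists_eq_add_edge hsym₁ hw
  exact ⟨w, m', add_right_comm _ _ _, hsym'⟩

theorem sum_arc_left (x y z : V) : ∑ u, arc x y z u = if z = x then 1 else 0 := by
  simp [arc, ite_and]

theorem sum_arc_right (x y z : V) : ∑ u, arc x y u z = if z = y then 1 else 0 := by
  simp [arc, ite_and, eq_comm]

def IsBalanced (d : V → V → ℕ) : Prop := ∀ v, ∑ u, d v u = ∑ u, d u v

theorem IsBalanced.reroute {d : V → V → ℕ} {x y : V} (h : IsBalanced (d + arc x y)) (v : V) :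
    IsBalanced (d + arc x v + arc v y) := by
  intro z
  have := h z
  simp only [Pi.add_apply, sum_add_distrib, sum_arc_left, sum_arc_right] at *
  split_ifs at * <;> omega

theorem exists_balanced_orientation (m : V → V → ℕ) (hsym : ∀ x y, m x y = m y x)
    (heven : ∀ v, Even (degree m v)) : ∃ d, underlying d = m ∧ IsBalanced d := by
  induction hn : ∑ v, degree m v using Nat.strong_induction_on generalizing m with
  | _ n ih =>
  by_cases hloops : ∀ u v, u ≠ v → m u v = 0
  · refine ⟨m, underlying_eq_self hloops, fun v => ?_⟩
    rw [sum_eq_single v (fun u _ hu => hloops v u (Ne.symm hu)) (by simp),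
      sum_eq_single v (fun u _ hu => hloops u v hu) (by simp)]
  push Not at hloops
  obtain ⟨v, u, hvu, hpos⟩ := hloops
  obtain ⟨w, m', rfl, hsym'⟩ :=
    exists_split_off hsym (heven v) hvu (Nat.pos_of_ne_zero hpos)
  have hlt : ∑ x, degree (m' + edge u w) x < n := by
    simp only [← hn, map_add, Pi.add_apply, sum_add_distrib, sum_degree_edge]
    omega
  have heven_uw : ∀ x, Even (degree (m' + edge u w) x) := fun x => by
    have := heven x
    simp only [map_add, Pi.add_apply, degree_edge, Nat.even_iff] at *
    split_ifs at * <;> omega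
  have hsym_uw : ∀ x y, (m' + edge u w) x y = (m' + edge u w) y x := fun x y => by
    simp only [Pi.add_apply, hsym' x y, edge_apply_comm u w x y]
  obtain ⟨d, hd, hbal⟩ := ih _ hlt (m' + edge u w) hsym_uw heven_uw rfl
  obtain ⟨d', rfl | rfl⟩ := exists_eq_add_arc_of_underlying_pos (d := d) (u := u) (w := w)
    (by rw [hd]; simp [edge])
  · have : underlying d' = m' := by
      simpa [underlying_arc] using hd
    refine ⟨d' + arc u v + arc v w, ?_, hbal.reroute v⟩
    simp [underlying_arc, this, edge_comm u v]
  · have : underlying d' = m' := by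
      simpa [underlying_arc, edge_comm w u] using hd
    refine ⟨d' + arc w v + arc v u, ?_, hbal.reroute v⟩
    simp [underlying_arc, this, edge_comm w v]
    abel

end Degrees

section Permutations

variable {V : Type*} [Fintype V]

theorem exists_perm_forall_pos {d : V → V → ℕ} {s : ℕ} (hs : s ≠ 0)
    (hrow : ∀ u, ∑ v, d u v = s) (hcol : ∀ v, ∑ u, d u v = s) :
    ∃ σ : Equiv.Perm V, ∀ u, 0 < d u (σ u) := by
  have hall : ∀ A : Finset V, #A ≤ #{v | ∃ u ∈ A, 0 < d u v} := by
    intro A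
    set T : Finset V := {v | ∃ u ∈ A, 0 < d u v}
    have hsupp : ∀ u ∈ A, ∑ v ∈ T, d u v = s := by
      intro u hu
      rw [← hrow u]
      refine sum_subset (subset_univ T) fun v _ hv => ?_
      by_contra h
      exact hv (mem_filter.mpr ⟨mem_univ v, u, hu, Nat.pos_of_ne_zero h⟩)
    refine Nat.le_of_mul_le_mul_left ?_ (Nat.pos_of_ne_zero hs)
    calc s * #A = ∑ u ∈ A, ∑ v ∈ T, d u v := by
          rw [sum_congr rfl hsupp, sum_const, smul_eq_mul, mul_comm]
      _ = ∑ v ∈ T, ∑ u ∈ A, d u v := sum_comm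
      _ ≤ ∑ v ∈ T, s := sum_le_sum fun v _ => hcol v ▸ sum_le_sum_of_subset (subset_univ A)
      _ = s * #T := by rw [sum_const, smul_eq_mul, mul_comm]
  obtain ⟨f, hinj, hf⟩ := (Fintype.all_card_le_filter_rel_iff_exists_injective _).mp hall
  exact ⟨Equiv.ofBijective f hinj.bijective_of_finite, hf⟩

variable [DecidableEq V]

def permArcs (σ : Equiv.Perm V) : V → V → ℕ := fun u v => if σ u = v then 1 else 0

theorem sum_permArcs_left (σ : Equiv.Perm V) (u : V) : ∑ v, permArcs σ u v = 1 := by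
  simp [permArcs]

theorem sum_permArcs_right (σ : Equiv.Perm V) (v : V) : ∑ u, permArcs σ u v = 1 := by
  simp [permArcs, ← Equiv.eq_symm_apply]

theorem degree_underlying_permArcs (σ : Equiv.Perm V) (v : V) :
    degree (underlying (permArcs σ)) v = 2 := by
  rw [degree_underlying, sum_permArcs_left, sum_permArcs_right]

theorem exists_eq_sum_permArcs (s : ℕ) (d : V → V → ℕ)
    (hrow : ∀ u, ∑ v, d u v = s) (hcol : ∀ v, ∑ u, d u v = s) :
    ∃ g : Fin s → Equiv.Perm V, d = ∑ t, permArcs (g t) := by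
  induction s generalizing d with
  | zero =>
    refine ⟨Fin.elim0, funext fun u => funext fun v => ?_⟩
    simpa using (sum_eq_zero_iff.mp (hrow u)) v (mem_univ v)
  | succ s ih =>
    obtain ⟨σ, hσ⟩ := exists_perm_forall_pos (Nat.succ_ne_zero s) hrow hcol
    have hle : permArcs σ ≤ d := fun u v => by
      simp only [permArcs]; split_ifs with h
      · exact h ▸ hσ u
      · exact Nat.zero_le _
    obtain ⟨d', rfl⟩ := exists_add_of_le hle
    obtain ⟨g, rfl⟩ := ih d'
      (fun u => by simpa [sum_add_distrib, sum_permArcs_left, add_comm] using hrow u)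
      (fun v => by
        have := hcol v
        simp only [Pi.add_apply, sum_add_distrib, sum_permArcs_right] at this
        omega)
    exact ⟨Fin.cons σ g, by simp [Fin.sum_univ_succ]⟩

theorem exists_twoFactorization {r : ℕ} (m : V → V → ℕ) (hsym : ∀ x y, m x y = m y x)
    (hreg : ∀ v, degree m v = 2 * r) :
    ∃ f : Fin r → V → V → ℕ,
      (∀ t x y, f t x y = f t y x) ∧ ∑ t, f t = m ∧ ∀ t v, degree (f t) v = 2 := by
  obtain ⟨d, rfl, hbal⟩ :=
    exists_balanced_orientation m hsym fun v => hreg v ▸ even_two_mul r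
  have hout : ∀ v, ∑ u, d v u = r := fun v => by
    have := hreg v; rw [degree_underlying, ← hbal v] at this; omega
  have hin : ∀ v, ∑ u, d u v = r := fun v => hbal v ▸ hout v
  obtain ⟨g, rfl⟩ := exists_eq_sum_permArcs r d hout hin
  exact ⟨fun t => underlying (permArcs (g t)), fun t => underlying_apply_comm _,
    (map_sum _ _ _).symm, fun t => degree_underlying_permArcs (g t)⟩

end Permutations

end Multigraph

theorem petersen_two_factor_general (V : Type*) [Fintype V] (r : ℕ)
    (m : V → V → ℕ) (hsym : ∀ u v, m u v = m v u)
    (hreg : ∀ v : V, (∑ u, m v u) + m v v = 2 * r) :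
    (∃ f : Fin r → V → V → ℕ,
      (∀ t u v, f t u v = f t v u) ∧
      (∀ u v, ∑ t, f t u v = m u v) ∧
      (∀ t v, (∑ u, f t v u) + f t v v = 2)) ∧
    (∀ k : ℕ, 1 ≤ k → k ≤ r → ∃ m' : V → V → ℕ,
      (∀ u v, m' u v ≤ m u v) ∧ (∀ u v, m' u v = m' v u) ∧
      (∀ v : V, (∑ u, m' v u) + m' v v = 2 * k)) := by
  classical
  obtain ⟨f, hsymf, hsum, hdeg⟩ := Multigraph.exists_twoFactorization m hsym hreg
  have hsum_apply : ∀ u v, ∑ t, f t u v = m u v := fun u v => by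
    rw [← hsum]; simp only [Finset.sum_apply]
  refine ⟨⟨f, hsymf, hsum_apply, hdeg⟩, fun k _ hkr => ?_⟩
  refine ⟨∑ t ∈ {t : Fin r | t < k}, f t, fun u v => ?_, fun u v => ?_, fun v => ?_⟩
  · rw [← hsum_apply, Finset.sum_apply, Finset.sum_apply]
    exact Finset.sum_le_sum_of_subset (Finset.subset_univ _)
  · simp only [Finset.sum_apply, hsymf]
  · change Multigraph.degree (∑ t ∈ {t : Fin r | t < k}, f t) v = 2 * k
    rw [map_sum, Finset.sum_apply, Finset.sum_congr rfl fun t _ => hdeg t v, Finset.sum_const,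
      Fin.card_filter_val_lt, min_eq_right hkr, smul_eq_mul, mul_comm]

/-- Petersen's 2-factor theorem. A multigraph is modeled by a symmetric
edge-multiplicity function `m : V → V → ℕ`, where `m v v` is the number of
loops at `v` and a loop contributes 2 to the degree, so the degree of `v` is
`(∑ u, m v u) + m v v`. Every `2r`-regular multigraph decomposes into `r`
spanning 2-regular subgraphs, and for every `1 ≤ k ≤ r` it has a spanning
`2k`-regular subgraph. -/
theorem petersen_two_factor (V : Type*) [Fintype V] [DecidableEq V] (r : ℕ) (hr : 1 ≤ r)
    (m : V → V → ℕ) (hsym : ∀ u v, m u v = m v u)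
    (hreg : ∀ v : V, (∑ u, m v u) + m v v = 2 * r) :
    (∃ f : Fin r → V → V → ℕ,
      (∀ t u v, f t u v = f t v u) ∧
      (∀ u v, ∑ t, f t u v = m u v) ∧
      (∀ t v, (∑ u, f t v u) + f t v v = 2)) ∧
    (∀ k : ℕ, 1 ≤ k → k ≤ r → ∃ m' : V → V → ℕ,
      (∀ u v, m' u v ≤ m u v) ∧ (∀ u v, m' u v = m' v u) ∧
      (∀ v : V, (∑ u, m' v u) + m' v v = 2 * k)) :=
  petersen_two_factor_general V r m hsym hreg
end

section
/- Let G be a loopless multigraph on n vertices in which every vertex has even degree 2k. Then the edge set of G can be partitioned into k spanning 2-regular subgraphs. -/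
open Finset

lemma orient (n : ℕ) : ∀ (N : ℕ) (m : Fin n → Fin n → ℕ),
    (∑ u, ∑ v, m u v) ≤ N → (∀ u v, m u v = m v u) → (∀ v, m v v = 0) →
    (∀ v, Even (∑ u, m v u)) →
    ∃ a : Fin n → Fin n → ℕ, (∀ u v, a u v + a v u = m u v) ∧
      (∀ v, 2 * ∑ u, a v u = ∑ u, m v u) := by
  intro N
  induction N with
  | zero =>
    intro m htot hsym hdiag heven
    have hz : ∀ u v, m u v = 0 := by
      intro u v
      have h1 : m u v ≤ ∑ u, ∑ v, m u v := by
        calc m u v ≤ ∑ v', m u v' := Finset.single_le_sum (fun i _ => Nat.zero_le _) (mem_univ v)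
          _ ≤ ∑ u', ∑ v', m u' v' :=
            Finset.single_le_sum (f := fun u' => ∑ v', m u' v') (fun i _ => Nat.zero_le _) (mem_univ u)
      omega
    exact ⟨fun _ _ => 0, fun u v => by simp [hz], fun v => by simp [hz]⟩
  | succ N ih =>
    intro m htot hsym hdiag heven
    by_cases hbig : ∃ u v, 2 ≤ m u v
    · -- remove a double edge, orient one each way
      obtain ⟨u, v, huv⟩ := hbig
      have hne : u ≠ v := fun h => by rw [h, hdiag] at huv; omega
      set d : Fin n → Fin n → ℕ :=
        fun p q => (if p = u ∧ q = v then 2 else 0) + (if p = v ∧ q = u then 2 else 0) with hd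
      have hdle : ∀ p q, d p q ≤ m p q := by
        intro p q
        have := hsym u v
        by_cases h1 : p = u ∧ q = v <;> by_cases h2 : p = v ∧ q = u <;>
          simp [hd, h1, h2, hne] <;> omega
      set m' : Fin n → Fin n → ℕ := fun p q => m p q - d p q with hm'
      have hmd : ∀ p q, m' p q + d p q = m p q := fun p q => Nat.sub_add_cancel (hdle p q)
      have hdsym : ∀ p q, d p q = d q p := by
        intro p q
        by_cases h1 : p = u ∧ q = v <;> by_cases h2 : p = v ∧ q = u <;>
          simp [hd, h1, h2, hne, and_comm] <;> tauto
      have hdrow : ∀ p, ∑ q, d p q = (if p = u then 2 else 0) + (if p = v then 2 else 0) := by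
        intro p
        rw [hd, Finset.sum_add_distrib]
        congr 1
        · by_cases h : p = u <;> simp [h, Finset.sum_ite_eq']
        · by_cases h : p = v <;> simp [h, Finset.sum_ite_eq']
      have hsym' : ∀ p q, m' p q = m' q p := by
        intro p q; rw [hm']; simp only; rw [hsym p q, hdsym p q]
      have hdiag' : ∀ p, m' p p = 0 := by
        intro p; rw [hm']; simp only [hdiag p]; omega
      have hrowm : ∀ p, ∑ q, m' p q + ∑ q, d p q = ∑ q, m p q := by
        intro p; rw [← Finset.sum_add_distrib]; exact Finset.sum_congr rfl fun q _ => hmd p q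
      have heven' : ∀ p, Even (∑ q, m' p q) := by
        intro p
        obtain ⟨r, hr⟩ := heven p
        have h1 := hrowm p
        have h2 : ∃ s, ∑ q, d p q = s + s := by
          rw [hdrow]; split_ifs
          exacts [⟨2, rfl⟩, ⟨1, rfl⟩, ⟨1, rfl⟩, ⟨0, rfl⟩]
        obtain ⟨s, hs⟩ := h2
        exact ⟨r - s, by omega⟩
      have htot' : ∑ p, ∑ q, m' p q ≤ N := by
        have h1 : ∑ p, (∑ q, m' p q + ∑ q, d p q) = ∑ p, ∑ q, m p q :=
          Finset.sum_congr rfl fun p _ => hrowm p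
        rw [Finset.sum_add_distrib] at h1
        have h2 : 2 ≤ ∑ p, ∑ q, d p q := by
          calc (2:ℕ) ≤ d u v := by simp [hd, hne]
            _ ≤ ∑ q, d u q := Finset.single_le_sum (fun i _ => Nat.zero_le _) (mem_univ v)
            _ ≤ ∑ p, ∑ q, d p q :=
              Finset.single_le_sum (f := fun p => ∑ q, d p q) (fun i _ => Nat.zero_le _) (mem_univ u)
        omega
      obtain ⟨a', ha'1, ha'2⟩ := ih m' htot' hsym' hdiag' heven'
      refine ⟨fun p q => a' p q + ((if p = u ∧ q = v then 1 else 0) + (if p = v ∧ q = u then 1 else 0)),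
        fun p q => ?_, fun p => ?_⟩
      · dsimp only
        have h1 := ha'1 p q
        have h2 := hmd p q
        have h3 : ((if p = u ∧ q = v then (1:ℕ) else 0) + (if p = v ∧ q = u then 1 else 0))
            + ((if q = u ∧ p = v then 1 else 0) + (if q = v ∧ p = u then 1 else 0)) = d p q := by
          by_cases hc1 : p = u ∧ q = v <;> by_cases hc2 : p = v ∧ q = u <;>
            simp [hd, hc1, hc2, hne] <;> tauto
        omega
      · dsimp only
        rw [Finset.sum_add_distrib, Finset.sum_add_distrib]
        have h1 : ∑ q, (if p = u ∧ q = v then (1:ℕ) else 0) = if p = u then 1 else 0 := by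
          by_cases h : p = u <;> simp [h, Finset.sum_ite_eq']
        have h2 : ∑ q, (if p = v ∧ q = u then (1:ℕ) else 0) = if p = v then 1 else 0 := by
          by_cases h : p = v <;> simp [h, Finset.sum_ite_eq']
        rw [h1, h2]
        have h3 := ha'2 p
        have h4 := hrowm p
        have h5 := hdrow p
        rw [h5] at h4
        split_ifs at h4 ⊢ <;> omega
    · -- all multiplicities ≤ 1 : find a cycle and orient it
      have hle1 : ∀ u v, m u v ≤ 1 := by
        intro u v; by_contra h; exact hbig ⟨u, v, by omega⟩
      by_cases hz : ∀ u v, m u v = 0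
      · exact ⟨fun _ _ => 0, fun u v => by simp [hz], fun v => by simp [hz]⟩
      push_neg at hz
      obtain ⟨x, y, hxy⟩ := hz
      haveI : Nonempty (Fin n) := ⟨x⟩
      classical
      have hstep : ∀ v w, m v w ≠ 0 → ∃ w', w' ≠ w ∧ m v w' ≠ 0 := by
        intro v w hvw
        by_contra hcon
        push_neg at hcon
        have hsum : ∑ u, m v u = m v w := by
          refine Finset.sum_eq_single w (fun b _ hb => hcon b hb) (fun hw => absurd (mem_univ w) hw)
        obtain ⟨r, hr⟩ := heven v
        have := hle1 v w
        omega
      choose! nxt hnxt1 hnxt2 using hstep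
      let wk : ℕ → Fin n × Fin n := fun i => Nat.rec (x, y) (fun _ p => (p.2, nxt p.2 p.1)) i
      let c : ℕ → Fin n := fun i => (wk i).1
      have hadj : ∀ i, m (c i) (c (i+1)) ≠ 0 := by
        intro i
        induction i with
        | zero => exact hxy
        | succ i ihh => exact hnxt2 (c (i+1)) (c i) (by rw [hsym]; exact ihh)
      have hnb : ∀ i, c (i+2) ≠ c i :=
        fun i => hnxt1 (c (i+1)) (c i) (by rw [hsym]; exact hadj i)
      -- pigeonhole: the walk revisits a vertex
      have hpig : ∃ i j, i < j ∧ j ≤ n ∧ c i = c j := by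
        have h1 : ∃ i ∈ Finset.range (n+1), ∃ j ∈ Finset.range (n+1), i ≠ j ∧ c i = c j :=
          Finset.exists_ne_map_eq_of_card_lt_of_maps_to (by simp) (fun a _ => mem_univ (c a))
        obtain ⟨i, hi, j, hj, hij, hc⟩ := h1
        simp only [Finset.mem_range] at hi hj
        rcases Nat.lt_or_ge i j with h | h
        · exact ⟨i, j, h, by omega, hc⟩
        · exact ⟨j, i, by omega, by omega, hc.symm⟩
      have hex : ∃ d, 0 < d ∧ ∃ i, i + d ≤ n ∧ c i = c (i + d) := by
        obtain ⟨i, j, hij, hjn, hc⟩ := hpig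
        exact ⟨j - i, by omega, i, by omega, by rw [show i + (j-i) = j by omega]; exact hc⟩
      set L := Nat.find hex with hLdef
      obtain ⟨hLpos, i, hiL, hci⟩ := Nat.find_spec hex
      rw [← hLdef] at hLpos hiL hci
      have hmin : ∀ d, d < L → ¬(0 < d ∧ ∃ i, i + d ≤ n ∧ c i = c (i + d)) :=
        fun d hd => Nat.find_min hex hd
      have hL1 : L ≠ 1 := by
        intro h
        rw [h] at hci
        exact hadj i (by rw [← hci]; exact hdiag _)
      have hL2 : L ≠ 2 := by
        intro h
        rw [h] at hci
        exact hnb i hci.symm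
      have hL3 : 3 ≤ L := by omega
      haveI : NeZero L := ⟨by omega⟩
      haveI : Fact (1 < L) := ⟨by omega⟩
      let C : ZMod L → Fin n := fun z => c (i + z.val)
      have hCval : ∀ z : ZMod L, C (z + 1) = c (i + z.val + 1) := by
        intro z
        have hv : (z + 1).val = (z.val + 1) % L := by
          rw [ZMod.val_add, ZMod.val_one]
        show c (i + (z+1).val) = c (i + z.val + 1)
        rw [hv]
        rcases Nat.lt_or_ge (z.val + 1) L with h | h
        · rw [Nat.mod_eq_of_lt h, ← Nat.add_assoc]
        · have hzv : z.val < L := ZMod.val_lt z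
          have h2 : z.val + 1 = L := by omega
          rw [h2, Nat.mod_self, Nat.add_zero]
          rw [show i + z.val + 1 = i + L by omega]
          exact hci
      have hCinj : Function.Injective C := by
        intro z z' hzz
        have h1 : z.val < L := ZMod.val_lt z
        have h2 : z'.val < L := ZMod.val_lt z'
        have h3 : z.val = z'.val := by
          by_contra hne'
          rcases Nat.lt_or_ge z.val z'.val with h | h
          · exact hmin (z'.val - z.val) (by omega) ⟨by omega, i + z.val, by omega,
              by rw [show i + z.val + (z'.val - z.val) = i + z'.val by omega]; exact hzz⟩
          · exact hmin (z.val - z'.val) (by omega) ⟨by omega, i + z'.val, by omega,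
              by rw [show i + z'.val + (z.val - z'.val) = i + z.val by omega]; exact hzz.symm⟩
        calc z = (z.val : ZMod L) := (ZMod.natCast_rightInverse z).symm
          _ = (z'.val : ZMod L) := by rw [h3]
          _ = z' := ZMod.natCast_rightInverse z'
      have hCadj : ∀ z : ZMod L, m (C z) (C (z+1)) ≠ 0 := by
        intro z
        rw [hCval z]
        exact hadj (i + z.val)
      -- the cycle's orientation matrix
      let o : Fin n → Fin n → ℕ := fun p q => ∑ z : ZMod L, if C z = p ∧ C (z+1) = q then 1 else 0
      let e : Fin n → ℕ := fun p => ∑ z : ZMod L, if C z = p then 1 else 0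
      have ho_wit : ∀ p q, o p q ≠ 0 → ∃ z : ZMod L, C z = p ∧ C (z+1) = q := by
        intro p q hpq
        by_contra hno
        push_neg at hno
        exact hpq (Finset.sum_eq_zero fun z _ => if_neg (fun hcc => hno z hcc.1 hcc.2))
      have ho_le1 : ∀ p q, o p q ≤ 1 := by
        intro p q
        have heq : o p q = #(univ.filter fun z : ZMod L => C z = p ∧ C (z+1) = q) := by
          simp [o, Finset.sum_boole]
        rw [heq, Finset.card_le_one]
        intro a ha b hb
        rw [Finset.mem_filter] at ha hb
        exact hCinj (ha.2.1.trans hb.2.1.symm)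
      have he1 : ∀ p, e p ≤ 1 := by
        intro p
        have heq : e p = #(univ.filter fun z : ZMod L => C z = p) := by
          simp [e, Finset.sum_boole]
        rw [heq, Finset.card_le_one]
        intro a ha b hb
        rw [Finset.mem_filter] at ha hb
        exact hCinj (ha.2.trans hb.2.symm)
      have ho_row : ∀ p, ∑ q, o p q = e p := by
        intro p
        show (∑ q, ∑ z : ZMod L, if C z = p ∧ C (z+1) = q then (1:ℕ) else 0)
          = ∑ z : ZMod L, if C z = p then 1 else 0
        rw [Finset.sum_comm]
        refine Finset.sum_congr rfl fun z _ => ?_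
        by_cases hcz : C z = p
        · simp [hcz, Finset.sum_ite_eq, Finset.sum_ite_eq']
        · simp [hcz]
      have ho_col : ∀ p, ∑ q, o q p = e p := by
        intro p
        show (∑ q, ∑ z : ZMod L, if C z = q ∧ C (z+1) = p then (1:ℕ) else 0)
          = ∑ z : ZMod L, if C z = p then 1 else 0
        rw [Finset.sum_comm]
        have h1 : ∀ z : ZMod L, (∑ q, if C z = q ∧ C (z+1) = p then (1:ℕ) else 0)
            = if C (z+1) = p then 1 else 0 := by
          intro z
          by_cases hcz : C (z+1) = p
          · simp [hcz, Finset.sum_ite_eq, Finset.sum_ite_eq']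
          · simp [hcz]
        rw [Finset.sum_congr rfl fun z _ => h1 z]
        exact Fintype.sum_equiv (Equiv.addRight (1 : ZMod L))
          (fun z => if C (z+1) = p then (1:ℕ) else 0) (fun z => if C z = p then (1:ℕ) else 0)
          (fun z => rfl)
      have hnot2 : ∀ p q, o p q ≠ 0 → o q p ≠ 0 → False := by
        intro p q h1 h2
        obtain ⟨z, hz1, hz2⟩ := ho_wit p q h1
        obtain ⟨z', hz1', hz2'⟩ := ho_wit q p h2
        have e1 : z' = z + 1 := hCinj (hz1'.trans hz2.symm)
        have e2 : z + 1 + 1 = z := by rw [← e1]; exact hCinj (hz2'.trans hz1.symm)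
        have e4 : (z + 2 : ZMod L) = z + 0 := by
          rw [add_zero]
          calc (z + 2 : ZMod L) = z + 1 + 1 := by ring
            _ = z := e2
        have e5 : (2 : ZMod L) = 0 := add_left_cancel e4
        have e6 : ((2:ℕ) : ZMod L) = 0 := by push_cast; exact e5
        rw [ZMod.natCast_eq_zero_iff] at e6
        have := Nat.le_of_dvd (by norm_num) e6
        omega
      let w : Fin n → Fin n → ℕ := fun p q => o p q + o q p
      have hw_le : ∀ p q, w p q ≤ m p q := by
        intro p q
        show o p q + o q p ≤ m p q
        rcases Nat.eq_zero_or_pos (o p q) with h1 | h1 <;>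
          rcases Nat.eq_zero_or_pos (o q p) with h2 | h2
        · simp [h1, h2]
        · obtain ⟨z, hz1, hz2⟩ := ho_wit q p (by omega)
          have hm : m q p ≠ 0 := by rw [← hz1, ← hz2]; exact hCadj z
          have h3 := ho_le1 q p
          have h4 := hsym p q
          omega
        · obtain ⟨z, hz1, hz2⟩ := ho_wit p q (by omega)
          have hm : m p q ≠ 0 := by rw [← hz1, ← hz2]; exact hCadj z
          have h3 := ho_le1 p q
          omega
        · exact (hnot2 p q (by omega) (by omega)).elim
      set m' : Fin n → Fin n → ℕ := fun p q => m p q - w p q with hm'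
      have hmw : ∀ p q, m' p q + w p q = m p q := fun p q => Nat.sub_add_cancel (hw_le p q)
      have hsym' : ∀ p q, m' p q = m' q p := by
        intro p q
        have h1 : w p q = w q p := add_comm _ _
        rw [hm']; simp only; rw [hsym p q, h1]
      have hdiag' : ∀ p, m' p p = 0 := by
        intro p; rw [hm']; simp only [hdiag p]; omega
      have hw_row : ∀ p, ∑ q, w p q = 2 * e p := by
        intro p
        show (∑ q, (o p q + o q p)) = 2 * e p
        rw [Finset.sum_add_distrib, ho_row p, ho_col p]
        ring
      have hrowm : ∀ p, ∑ q, m' p q + ∑ q, w p q = ∑ q, m p q := by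
        intro p; rw [← Finset.sum_add_distrib]; exact Finset.sum_congr rfl fun q _ => hmw p q
      have heven' : ∀ p, Even (∑ q, m' p q) := by
        intro p
        obtain ⟨r, hr⟩ := heven p
        have h1 := hrowm p
        have h2 := hw_row p
        exact ⟨r - e p, by omega⟩
      have hopos : 1 ≤ o (C 0) (C (0+1)) := by
        show 1 ≤ ∑ z : ZMod L, if C z = C 0 ∧ C (z+1) = C (0+1) then (1:ℕ) else 0
        calc (1:ℕ) = if C 0 = C 0 ∧ C (0+1) = C (0+1) then 1 else 0 := by simp
          _ ≤ _ := Finset.single_le_sum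
            (f := fun z => if C z = C 0 ∧ C (z+1) = C (0+1) then (1:ℕ) else 0)
            (fun z _ => Nat.zero_le _) (mem_univ 0)
      have htot' : ∑ p, ∑ q, m' p q ≤ N := by
        have h1 : ∑ p, (∑ q, m' p q + ∑ q, w p q) = ∑ p, ∑ q, m p q :=
          Finset.sum_congr rfl fun p _ => hrowm p
        rw [Finset.sum_add_distrib] at h1
        have h2 : 1 ≤ ∑ p, ∑ q, w p q := by
          calc (1:ℕ) ≤ o (C 0) (C (0+1)) := hopos
            _ ≤ w (C 0) (C (0+1)) := Nat.le_add_right _ _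
            _ ≤ ∑ q, w (C 0) q := Finset.single_le_sum (fun q _ => Nat.zero_le _) (mem_univ _)
            _ ≤ ∑ p, ∑ q, w p q := Finset.single_le_sum (f := fun p => ∑ q, w p q)
                (fun p _ => Nat.zero_le _) (mem_univ _)
        omega
      obtain ⟨a', ha'1, ha'2⟩ := ih m' htot' hsym' hdiag' heven'
      refine ⟨fun p q => a' p q + o p q, fun p q => ?_, fun p => ?_⟩
      · show a' p q + o p q + (a' q p + o q p) = m p q
        have h1 := ha'1 p q
        have h2 := hmw p q
        have h3 : o p q + o q p = w p q := rfl
        omega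
      · show 2 * ∑ q, (a' p q + o p q) = ∑ q, m p q
        rw [Finset.sum_add_distrib, ho_row p]
        have h1 := ha'2 p
        have h2 := hrowm p
        have h3 := hw_row p
        omega


lemma perm_ind_sum {n : ℕ} (σ : Equiv.Perm (Fin n)) (v : Fin n) :
    ∑ u, (if σ u = v then (1:ℕ) else 0) = 1 := by
  simp [Equiv.apply_eq_iff_eq_symm_apply, Finset.sum_ite_eq']

lemma perm_ind_sum' {n : ℕ} (σ : Equiv.Perm (Fin n)) (v : Fin n) :
    ∑ u, (if σ v = u then (1:ℕ) else 0) = 1 := by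
  simp [eq_comm, Finset.sum_ite_eq']

lemma birkhoff (n : ℕ) : ∀ (k : ℕ) (a : Fin n → Fin n → ℕ),
    (∀ v, ∑ u, a v u = k) → (∀ v, ∑ u, a u v = k) → (∀ v, a v v = 0) →
    ∃ σ : Fin k → Equiv.Perm (Fin n),
      (∀ u v, a u v = ∑ t, if σ t u = v then 1 else 0) ∧ (∀ t v, σ t v ≠ v) := by
  intro k
  induction k with
  | zero =>
    intro a hrow _ _
    refine ⟨fun t => t.elim0, fun u v => ?_, fun t => t.elim0⟩
    have h0 : a u v = 0 := by
      have := hrow u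
      have h1 : a u v ≤ ∑ x, a u x := Finset.single_le_sum (fun i _ => Nat.zero_le _) (mem_univ v)
      omega
    simp [h0]
  | succ k ih =>
    intro a hrow hcol hdiag
    -- Hall's condition
    have hall : ∀ s : Finset (Fin n), #s ≤ #(s.biUnion (fun v => univ.filter (fun u => a v u ≠ 0))) := by
      intro s
      set N := s.biUnion (fun v => univ.filter (fun u => a v u ≠ 0)) with hN
      have key : #s * (k+1) ≤ #N * (k+1) := by
        calc #s * (k+1) = ∑ v ∈ s, ∑ u, a v u := by
              rw [Finset.sum_congr rfl (fun v _ => hrow v)]; simp [mul_comm]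
          _ = ∑ v ∈ s, ∑ u ∈ N, a v u := by
              refine Finset.sum_congr rfl (fun v hv => ?_)
              rw [← Finset.sum_filter_add_sum_filter_not univ (fun u => a v u ≠ 0)]
              have h2 : ∑ u ∈ univ.filter (fun u => ¬ a v u ≠ 0), a v u = 0 := by
                refine Finset.sum_eq_zero (fun u hu => ?_)
                simpa using (Finset.mem_filter.mp hu).2
              rw [h2, add_zero]
              refine Finset.sum_le_sum_of_subset (fun u hu => ?_) |>.antisymm ?_
              · exact Finset.mem_biUnion.mpr ⟨v, hv, hu⟩
              · rw [← Finset.sum_filter_add_sum_filter_not N (fun u => a v u ≠ 0)]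
                have h3 : ∑ u ∈ N.filter (fun u => ¬ a v u ≠ 0), a v u = 0 := by
                  refine Finset.sum_eq_zero (fun u hu => ?_)
                  simpa using (Finset.mem_filter.mp hu).2
                rw [h3, add_zero]
                refine Finset.sum_le_sum_of_subset (fun u hu => ?_)
                simp only [Finset.mem_filter] at hu ⊢
                exact ⟨mem_univ _, hu.2⟩
          _ = ∑ u ∈ N, ∑ v ∈ s, a v u := Finset.sum_comm
          _ ≤ ∑ u ∈ N, ∑ v, a v u :=
              Finset.sum_le_sum (fun u _ => Finset.sum_le_sum_of_subset (fun v _ => mem_univ v))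
          _ = #N * (k+1) := by
              rw [Finset.sum_congr rfl (fun u _ => hcol u)]; simp [mul_comm]
      exact Nat.le_of_mul_le_mul_right key (Nat.succ_pos k)
    obtain ⟨g, hginj, hg⟩ := (Finset.all_card_le_biUnion_card_iff_exists_injective _).mp hall
    have hg' : ∀ v, a v (g v) ≠ 0 := fun v => by simpa using hg v
    let σ₀ : Equiv.Perm (Fin n) := Equiv.ofBijective g (Finite.injective_iff_bijective.mp hginj)
    have hσ₀ : ∀ v, σ₀ v = g v := fun v => rfl
    set a' : Fin n → Fin n → ℕ := fun v u => a v u - (if σ₀ v = u then 1 else 0) with ha'def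
    have ha' : ∀ v u, a' v u + (if σ₀ v = u then 1 else 0) = a v u := by
      intro v u
      rcases eq_or_ne (σ₀ v) u with h | h
      · have : a v u ≠ 0 := by rw [← h, hσ₀]; exact hg' v
        simp [ha'def, h]; omega
      · simp [ha'def, h]
    have hrow' : ∀ v, ∑ u, a' v u = k := by
      intro v
      have := hrow v
      have h1 : ∑ u, a' v u + ∑ u, (if σ₀ v = u then (1:ℕ) else 0) = k + 1 := by
        rw [← Finset.sum_add_distrib]
        simp only [ha']
        omega
      rw [perm_ind_sum'] at h1; omega
    have hcol' : ∀ u, ∑ v, a' v u = k := by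
      intro u
      have := hcol u
      have h1 : ∑ v, a' v u + ∑ v, (if σ₀ v = u then (1:ℕ) else 0) = k + 1 := by
        rw [← Finset.sum_add_distrib]
        simp only [ha']
        omega
      rw [perm_ind_sum] at h1; omega
    have hdiag' : ∀ v, a' v v = 0 := by
      intro v; simp [ha'def, hdiag v]
    obtain ⟨σ', hσ'1, hσ'2⟩ := ih a' hrow' hcol' hdiag'
    refine ⟨Fin.cons σ₀ σ', fun u v => ?_, fun t => ?_⟩
    · rw [Fin.sum_univ_succ]
      simp only [Fin.cons_zero, Fin.cons_succ]
      rw [← hσ'1 u v]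
      have := ha' u v
      omega
    · refine Fin.cases ?_ ?_ t
      · intro v
        simp only [Fin.cons_zero]
        intro h
        exact hg' v (by rw [← hσ₀, h, hdiag])
      · intro i v
        simp only [Fin.cons_succ]
        exact hσ'2 i v


/-- A loopless multigraph on `n` vertices (symmetric multiplicity function with
zero diagonal) in which every vertex has degree `2k` decomposes into `k`
spanning 2-regular subgraphs. -/
theorem even_regular_two_factorization (n k : ℕ) (m : Fin n → Fin n → ℕ)
    (hsym : ∀ u v, m u v = m v u) (hloop : ∀ v, m v v = 0)
    (hreg : ∀ v, ∑ u, m v u = 2 * k) :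
    ∃ f : Fin k → Fin n → Fin n → ℕ,
      (∀ t u v, f t u v = f t v u) ∧
      (∀ t v, f t v v = 0) ∧
      (∀ u v, ∑ t, f t u v = m u v) ∧
      (∀ t v, ∑ u, f t v u = 2) := by
  obtain ⟨a, ha1, ha2⟩ := orient n (∑ u, ∑ v, m u v) m le_rfl hsym hloop
    (fun v => by rw [hreg v]; exact ⟨k, by ring⟩)
  have harow : ∀ v, ∑ u, a v u = k := by
    intro v
    have := ha2 v
    rw [hreg v] at this
    omega
  have hacol : ∀ v, ∑ u, a u v = k := by
    intro v
    have h1 : ∑ u, a v u + ∑ u, a u v = ∑ u, m v u := by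
      rw [← Finset.sum_add_distrib]
      exact Finset.sum_congr rfl fun u _ => ha1 v u
    rw [hreg v, harow v] at h1
    omega
  have hadiag : ∀ v, a v v = 0 := by
    intro v
    have := ha1 v v
    rw [hloop v] at this
    omega
  obtain ⟨σ, hσ1, hσ2⟩ := birkhoff n k a harow hacol hadiag
  refine ⟨fun t u v => (if σ t u = v then 1 else 0) + (if σ t v = u then 1 else 0),
    fun t u v => add_comm _ _, fun t v => by simp [hσ2 t v], fun u v => ?_, fun t v => ?_⟩
  · rw [Finset.sum_add_distrib, ← hσ1 u v, ← hσ1 v u]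
    exact ha1 u v
  · rw [Finset.sum_add_distrib]
    have h1 : ∑ u, (if σ t v = u then (1:ℕ) else 0) = 1 := perm_ind_sum' (σ t) v
    have h2 : ∑ u, (if σ t u = v then (1:ℕ) else 0) = 1 := perm_ind_sum (σ t) v
    omega
end

section
/- Let n ≥ 2 and k ≥ 1. Suppose (m_{ij})_{1 ≤ i < j ≤ n} are nonnegative integers such that for every vertex i, the sum of m_{ij} over all j ≠ i (interpreting m_{ji} for j < i) equals 2k. Then there exist nonnegative integer families (m^{(1)}), …, (m^{(k)}) with m_{ij} = m^{(1)}_{ij} + ⋯ + m^{(k)}_{ij} such that for each t and each vertex i, the sum of m^{(t)}_{ij} over all j ≠ i equals 2. -/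
/-!
Orient the multigraph so that every vertex has in- and out-degree `k`. Such an Euler orientation
exists for every loopless multigraph with even degrees, by splitting off: at a vertex `v` replace
two edges `va`, `vb` by one edge `ab`, orient the smaller multigraph, and replace the arc between
`a` and `b` by the path through `v` (if `a = b`, the doubled edge `va` is a 2-cycle instead).
The orientation `d` has all row and column sums `k`, so by Birkhoff–von Neumann it is a sum of
`k` permutation matrices `P_σ`, and each `P_σ + P_σᵀ` is a 2-factor; it has no loops because `d`
has zero diagonal.
-/

open Finset Matrix Equiv

section NatMatrix

variable {ι κ : Type*}

lemma Matrix.exists_eq_add_of_le {c d : Matrix ι κ ℕ} (h : ∀ i j, c i j ≤ d i j) :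
    ∃ d₀, d = d₀ + c :=
  ⟨d - c, by ext i j; simp [Nat.sub_add_cancel (h i j)]⟩

lemma Matrix.exists_eq_add_single_one [DecidableEq ι] [DecidableEq κ] {d : Matrix ι κ ℕ}
    {a : ι} {b : κ} (h : 0 < d a b) : ∃ d₀, d = d₀ + single a b 1 :=
  exists_eq_add_of_le fun i j => by
    rw [single_apply]
    split_ifs with hij
    · exact hij.1 ▸ hij.2 ▸ h
    · exact Nat.zero_le _

end NatMatrix

section PermMatrix

variable {V R : Type*} [DecidableEq V]

lemma Equiv.Perm.permMatrix_apply [Zero R] [One R] (σ : Perm V) (i j : V) :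
    σ.permMatrix R i j = if σ i = j then 1 else 0 := by
  simp [PEquiv.toMatrix_apply, toPEquiv_apply]

variable [Fintype V] [AddCommMonoidWithOne R]

lemma Equiv.Perm.sum_permMatrix_apply_row (σ : Perm V) (i : V) :
    ∑ j, σ.permMatrix R i j = 1 := by
  simp

lemma Equiv.Perm.sum_permMatrix_apply_col (σ : Perm V) (j : V) :
    ∑ i, σ.permMatrix R i j = 1 := by
  simp [← σ.eq_symm_apply]

end PermMatrix

section PermMatrixDecomposition

variable {V : Type*} [Fintype V] [DecidableEq V]

/-- `d / s` is doubly stochastic, so by Birkhoff–von Neumann some permutation matrix occurs in it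
with positive weight. -/
lemma exists_perm_forall_pos_of_sum_eq {d : Matrix V V ℕ} {s : ℕ} (hs : 0 < s)
    (hrow : ∀ i, ∑ j, d i j = s) (hcol : ∀ j, ∑ i, d i j = s) :
    ∃ σ : Perm V, ∀ i, 0 < d i (σ i) := by
  obtain ⟨M, hM, hdM⟩ : ∃ M ∈ doublyStochastic ℚ V, d.map ((↑) : ℕ → ℚ) = (s : ℚ) • M := by
    rw [exists_mem_doublyStochastic_eq_smul_iff (by positivity)]
    refine ⟨fun i j => by simp, fun i => ?_, fun j => ?_⟩
    · simp [← hrow i]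
    · simp [← hcol j]
  obtain ⟨w, hw0, hw1, hwM⟩ := exists_eq_sum_perm_of_mem_doublyStochastic hM
  obtain ⟨σ, -, hσ⟩ := exists_ne_zero_of_sum_ne_zero (hw1 ▸ one_ne_zero)
  refine ⟨σ, fun i => ?_⟩
  have hle : w σ ≤ M i (σ i) :=
    calc w σ = (w σ • σ.permMatrix ℚ) i (σ i) := by simp
      _ ≤ ∑ τ, (w τ • τ.permMatrix ℚ) i (σ i) :=
        single_le_sum (f := fun τ => (w τ • τ.permMatrix ℚ) i (σ i))
          (fun τ _ => by simpa using ite_nonneg (hw0 τ) le_rfl) (mem_univ σ)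
      _ = M i (σ i) := by rw [← Matrix.sum_apply, hwM]
  have hpos : (0 : ℚ) < d i (σ i) := by
    have hdi := congr_fun₂ hdM i (σ i)
    simp only [map_apply, Matrix.smul_apply, smul_eq_mul] at hdi
    rw [hdi]
    exact mul_pos (by exact_mod_cast hs) (((hw0 σ).lt_of_ne' hσ).trans_le hle)
  exact_mod_cast hpos

theorem exists_eq_sum_permMatrix {k : ℕ} (d : Matrix V V ℕ)
    (hrow : ∀ i, ∑ j, d i j = k) (hcol : ∀ j, ∑ i, d i j = k) :
    ∃ σ : Fin k → Perm V, d = ∑ t, (σ t).permMatrix ℕ := by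
  induction k generalizing d with
  | zero =>
    refine ⟨finZeroElim, ?_⟩
    ext i j
    simpa using sum_eq_zero_iff.mp (hrow i) j (mem_univ j)
  | succ k ih =>
    obtain ⟨σ₀, hσ₀⟩ := exists_perm_forall_pos_of_sum_eq k.succ_pos hrow hcol
    obtain ⟨d₀, rfl⟩ := exists_eq_add_of_le (c := σ₀.permMatrix ℕ) (d := d) fun i j => by
      rw [σ₀.permMatrix_apply]
      split_ifs with h
      · exact h ▸ hσ₀ i
      · exact Nat.zero_le _
    obtain ⟨σ, hσ⟩ := ih d₀
      (fun i => by
        have := hrow i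
        simp only [Matrix.add_apply, sum_add_distrib, σ₀.sum_permMatrix_apply_row] at this
        omega)
      (fun j => by
        have := hcol j
        simp only [Matrix.add_apply, sum_add_distrib, σ₀.sum_permMatrix_apply_col] at this
        omega)
    exact ⟨Fin.cons σ₀ σ, by rw [Fin.sum_univ_succ, hσ]; simp [add_comm]⟩

end PermMatrixDecomposition

section Multigraph

variable {V : Type*} [Fintype V]

/-- `m i j` is the number of edges between `i` and `j`. -/
structure IsEvenMultigraph (m : Matrix V V ℕ) : Prop where
  isSymm : m.IsSymm
  apply_self : ∀ i, m i i = 0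
  even_sum : ∀ i, Even (∑ j, m i j)

/-- `d i j` is the number of edges between `i` and `j` oriented from `i` to `j`. -/
def IsBalancedOrientation (m d : Matrix V V ℕ) : Prop :=
  d + dᵀ = m ∧ ∀ i, ∑ j, d i j = ∑ j, d j i

namespace IsEvenMultigraph

variable {m c : Matrix V V ℕ}

lemma add (hm : IsEvenMultigraph m) (hc : IsEvenMultigraph c) : IsEvenMultigraph (m + c) where
  isSymm := hm.isSymm.add hc.isSymm
  apply_self i := by simp [hm.apply_self, hc.apply_self]
  even_sum i := by simpa [sum_add_distrib] using (hm.even_sum i).add (hc.even_sum i)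

lemma of_add (h : IsEvenMultigraph (m + c)) (hc : IsEvenMultigraph c) : IsEvenMultigraph m where
  isSymm := add_right_cancel (b := c) <| by
    rw [← hc.isSymm.eq, ← transpose_add, h.isSymm.eq, hc.isSymm.eq]
  apply_self i := by simpa using congr_arg (· - c i i) (h.apply_self i)
  even_sum i := by
    have := h.even_sum i
    simp only [Matrix.add_apply, sum_add_distrib] at this
    exact (Nat.even_add.mp this).mpr (hc.even_sum i)

end IsEvenMultigraph

namespace IsBalancedOrientation

variable {m m' d d' : Matrix V V ℕ}

lemma add (h : IsBalancedOrientation m d) (h' : IsBalancedOrientation m' d') :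
    IsBalancedOrientation (m + m') (d + d') :=
  ⟨by rw [transpose_add, ← h.1, ← h'.1]; abel,
    fun i => by simp [sum_add_distrib, h.2 i, h'.2 i]⟩

lemma add_self_of_isSymm (hd : d.IsSymm) : IsBalancedOrientation (d + d) d :=
  ⟨by rw [hd.eq], fun i => sum_congr rfl fun j _ => hd.apply j i⟩

lemma two_mul_sum_apply (h : IsBalancedOrientation m d) (i : V) :
    2 * ∑ j, d i j = ∑ j, m i j := by
  simp only [← h.1, Matrix.add_apply, transpose_apply, sum_add_distrib, ← h.2 i, two_mul]

end IsBalancedOrientation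

variable [DecidableEq V]

lemma sum_single_one_apply_row (a b i : V) :
    ∑ j, single a b (1 : ℕ) i j = if i = a then 1 else 0 := by
  by_cases h : i = a <;> simp [single_apply, h, Ne.symm]

lemma sum_single_one_apply_col (a b j : V) :
    ∑ i, single a b (1 : ℕ) i j = if j = b then 1 else 0 := by
  by_cases h : j = b <;> simp [single_apply, h, Ne.symm]

def edgeMatrix (a b : V) : Matrix V V ℕ := single a b 1 + single b a 1

section

omit [Fintype V]

lemma edgeMatrix_comm (a b : V) : edgeMatrix a b = edgeMatrix b a := add_comm _ _

lemma edgeMatrix_isSymm (a b : V) : (edgeMatrix a b).IsSymm := by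
  simp [IsSymm, edgeMatrix, transpose_single, add_comm]

lemma edgeMatrix_apply_self {a b : V} (hab : a ≠ b) (i : V) : edgeMatrix a b i i = 0 := by
  simpa [edgeMatrix, single_apply] using
    ⟨fun hai hbi => hab (hai.trans hbi.symm), fun hbi hai => hab (hai.trans hbi.symm)⟩

end

lemma sum_edgeMatrix_apply (a b i : V) :
    ∑ j, edgeMatrix a b i j = (if i = a then 1 else 0) + (if i = b then 1 else 0) := by
  simp only [edgeMatrix, Matrix.add_apply, sum_add_distrib, sum_single_one_apply_row]

lemma sum_sum_edgeMatrix (a b : V) : ∑ i, ∑ j, edgeMatrix a b i j = 2 := by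
  simp [sum_edgeMatrix_apply, sum_add_distrib]

lemma isEvenMultigraph_edgeMatrix_add_self {a b : V} (hab : a ≠ b) :
    IsEvenMultigraph (edgeMatrix a b + edgeMatrix a b) where
  isSymm := (edgeMatrix_isSymm a b).add (edgeMatrix_isSymm a b)
  apply_self i := by simp [edgeMatrix_apply_self hab]
  even_sum i := by simp [sum_add_distrib]

lemma isEvenMultigraph_triangle {a b c : V} (hab : a ≠ b) (hac : a ≠ c) (hbc : b ≠ c) :
    IsEvenMultigraph (edgeMatrix a b + edgeMatrix a c + edgeMatrix b c) where
  isSymm := ((edgeMatrix_isSymm a b).add (edgeMatrix_isSymm a c)).add (edgeMatrix_isSymm b c)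
  apply_self i := by simp [edgeMatrix_apply_self, hab, hac, hbc]
  even_sum i := by
    simp only [Matrix.add_apply, sum_add_distrib, sum_edgeMatrix_apply]
    exact ⟨(if i = a then 1 else 0) + (if i = b then 1 else 0) + (if i = c then 1 else 0),
      by ring⟩

lemma IsEvenMultigraph.exists_eq_add_edgeMatrix_add_edgeMatrix {m : Matrix V V ℕ}
    (h : IsEvenMultigraph m) (hm : m ≠ 0) :
    ∃ m₀ v a b, v ≠ a ∧ v ≠ b ∧ m = m₀ + (edgeMatrix v a + edgeMatrix v b) := by
  have hne {v a : V} (hva : m v a ≠ 0) : v ≠ a := fun h' => hva (h' ▸ h.apply_self v)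
  obtain ⟨v, a, hva⟩ : ∃ v a, m v a ≠ 0 := by
    by_contra! h0
    exact hm (Matrix.ext h0)
  obtain ⟨b, hvb, hb⟩ : ∃ b, v ≠ b ∧ (if b = a then 2 else 1) ≤ m v b := by
    by_cases h2 : 2 ≤ m v a
    · exact ⟨a, hne hva, by simpa using h2⟩
    -- `m v a = 1` and the degree of `v` is even, so `v` has another neighbour
    have hrest : ∑ j ∈ univ.erase a, m v j ≠ 0 := by
      have hsplit := add_sum_erase univ (m v) (mem_univ a)
      have := Nat.even_iff.mp (h.even_sum v)
      omega
    obtain ⟨b, hb, hb0⟩ := exists_ne_zero_of_sum_ne_zero hrest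
    exact ⟨b, hne hb0, by rw [if_neg (ne_of_mem_erase hb)]; omega⟩
  obtain ⟨m₀, hm₀⟩ := exists_eq_add_of_le (c := edgeMatrix v a + edgeMatrix v b) (d := m)
    fun i j => by
      have hsym := h.isSymm.apply
      simp only [edgeMatrix, Matrix.add_apply, single_apply]
      split_ifs at hb ⊢ <;> grind
  exact ⟨m₀, v, a, b, hne hva, hvb, hm₀⟩

lemma IsBalancedOrientation.exists_eq_add_single {m d : Matrix V V ℕ} {a b : V}
    (h : IsBalancedOrientation (m + edgeMatrix a b) d) :
    ∃ d₀, d = d₀ + single a b 1 ∨ d = d₀ + single b a 1 := by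
  have hab : 0 < d a b + d b a := by
    have := congr_fun₂ h.1 a b
    simp only [Matrix.add_apply, transpose_apply, edgeMatrix, single_apply_same, single_apply] at this
    omega
  rcases Nat.eq_zero_or_pos (d a b) with h0 | hpos
  · obtain ⟨d₀, hd₀⟩ := exists_eq_add_single_one (show 0 < d b a by omega)
    exact ⟨d₀, Or.inr hd₀⟩
  · obtain ⟨d₀, hd₀⟩ := exists_eq_add_single_one hpos
    exact ⟨d₀, Or.inl hd₀⟩

lemma IsBalancedOrientation.reroute {m d : Matrix V V ℕ} {a b v : V}
    (h : IsBalancedOrientation (m + edgeMatrix a b) (d + single a b 1)) :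
    IsBalancedOrientation (m + edgeMatrix a v + edgeMatrix v b)
      (d + single a v 1 + single v b 1) := by
  obtain ⟨hsum, hbal⟩ := h
  have hd : d + dᵀ = m := add_right_cancel (b := edgeMatrix a b) <| by
    rw [← hsum, transpose_add, transpose_single, edgeMatrix]; abel
  refine ⟨by simp only [← hd, transpose_add, transpose_single, edgeMatrix]; abel, fun i => ?_⟩
  have := hbal i
  simp only [Matrix.add_apply, sum_add_distrib, sum_single_one_apply_row,
    sum_single_one_apply_col] at this ⊢
  split_ifs at this ⊢ <;> omega

theorem IsEvenMultigraph.exists_isBalancedOrientation {m : Matrix V V ℕ}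
    (h : IsEvenMultigraph m) : ∃ d, IsBalancedOrientation m d := by
  induction hN : ∑ i, ∑ j, m i j using Nat.strong_induction_on generalizing m with
  | _ N ih =>
  by_cases hm : m = 0
  · exact ⟨0, by simp [IsBalancedOrientation, hm]⟩
  obtain ⟨m₀, v, a, b, hva, hvb, rfl⟩ := h.exists_eq_add_edgeMatrix_add_edgeMatrix hm
  have htotal : ∑ i, ∑ j, m₀ i j + 4 = N := by
    simp only [← hN, Matrix.add_apply, sum_add_distrib, sum_sum_edgeMatrix]
  rcases eq_or_ne a b with rfl | hab
  · obtain ⟨d₀, hd₀⟩ := ih _ (by omega) (h.of_add (isEvenMultigraph_edgeMatrix_add_self hva)) rfl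
    exact ⟨d₀ + edgeMatrix v a,
      hd₀.add (IsBalancedOrientation.add_self_of_isSymm (edgeMatrix_isSymm v a))⟩
  have hsplit : IsEvenMultigraph (m₀ + edgeMatrix a b) := by
    refine IsEvenMultigraph.of_add (c := edgeMatrix v a + edgeMatrix v b + edgeMatrix a b) ?_
      (isEvenMultigraph_triangle hva hvb hab)
    convert h.add (isEvenMultigraph_edgeMatrix_add_self hab) using 1
    abel
  obtain ⟨d, hd⟩ := ih _ (by simp only [Matrix.add_apply, sum_add_distrib, sum_sum_edgeMatrix]; omega)
    hsplit rfl
  obtain ⟨d₀, rfl | rfl⟩ := hd.exists_eq_add_single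
  · exact ⟨_, by rw [edgeMatrix_comm v a, ← add_assoc]; exact hd.reroute⟩
  · rw [edgeMatrix_comm] at hd
    exact ⟨_, by rw [add_comm (edgeMatrix v a), edgeMatrix_comm v b, ← add_assoc]; exact hd.reroute⟩

end Multigraph

theorem multiplicity_two_factorization_general (n k : ℕ)
    (m : Fin n → Fin n → ℕ)
    (hsym : ∀ i j, m i j = m j i) (hdiag : ∀ i, m i i = 0)
    (hdeg : ∀ i, ∑ j, m i j = 2 * k) :
    ∃ f : Fin k → Fin n → Fin n → ℕ,
      (∀ t i j, f t i j = f t j i) ∧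
      (∀ t i, f t i i = 0) ∧
      (∀ i j, m i j = ∑ t, f t i j) ∧
      (∀ t i, ∑ j, f t i j = 2) := by
  have hm : IsEvenMultigraph m :=
    ⟨IsSymm.ext fun i j => hsym j i, hdiag, fun i => hdeg i ▸ even_two_mul k⟩
  obtain ⟨d, hd⟩ := hm.exists_isBalancedOrientation
  have hrow (i : Fin n) : ∑ j, d i j = k := by
    have := hd.two_mul_sum_apply i
    rw [hdeg] at this
    omega
  obtain ⟨σ, hσ⟩ := exists_eq_sum_permMatrix d hrow fun j => (hd.2 j).symm.trans (hrow j)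
  have hfix (t : Fin k) (i : Fin n) : σ t i ≠ i := by
    have hdii : d i i = 0 := by
      have := congr_fun₂ hd.1 i i
      simp only [Matrix.add_apply, transpose_apply, hdiag] at this
      omega
    rw [hσ, Matrix.sum_apply, sum_eq_zero_iff] at hdii
    simpa [(σ t).permMatrix_apply] using hdii t (mem_univ t)
  refine ⟨fun t => (σ t).permMatrix ℕ + ((σ t).permMatrix ℕ)ᵀ, fun t i j => add_comm _ _,
    fun t i => ?_, fun i j => ?_, fun t i => ?_⟩
  · simp only [Matrix.add_apply, transpose_apply, (σ t).permMatrix_apply, if_neg (hfix t i),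
      add_zero]
  · rw [← hd.1, hσ, transpose_sum, ← sum_add_distrib, Matrix.sum_apply]
  · simp only [Matrix.add_apply, transpose_apply, sum_add_distrib,
      (σ t).sum_permMatrix_apply_row, (σ t).sum_permMatrix_apply_col, one_add_one_eq_two]

/-- Multiplicity-function form of 2-factorization: if `m i j` (symmetric, zero
on the diagonal) gives each vertex degree `2k`, then `m` is a sum of `k`
multiplicity functions each giving every vertex degree `2`. -/
theorem multiplicity_two_factorization (n k : ℕ) (hn : 2 ≤ n) (hk : 1 ≤ k)
    (m : Fin n → Fin n → ℕ)
    (hsym : ∀ i j, m i j = m j i) (hdiag : ∀ i, m i i = 0)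
    (hdeg : ∀ i, ∑ j, m i j = 2 * k) :
    ∃ f : Fin k → Fin n → Fin n → ℕ,
      (∀ t i j, f t i j = f t j i) ∧
      (∀ t i, f t i i = 0) ∧
      (∀ i j, m i j = ∑ t, f t i j) ∧
      (∀ t i, ∑ j, f t i j = 2) :=
  multiplicity_two_factorization_general n k m hsym hdiag hdeg
end

section
/- Let k ≥ 1 and let Γ be a 2k × 3 tableau with entries in {1,…,6}, strictly increasing rows, non-decreasing columns, and each value appearing exactly k times. If the first row of Γ is (1,3,5), then the last row of Γ is (2,4,6). -/
open Finset

/-- For a `2k × 3` tableau with entries in `{1,…,6}`, strictly increasing rows,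
non-decreasing columns, and each value appearing exactly `k` times: if the
first row is `(1,3,5)` then the last row is `(2,4,6)`. -/
theorem g36_row135_last_row (k : ℕ) (hk : 1 ≤ k) (Γ : Fin (2 * k) → Fin 3 → ℕ)
    (hval : ∀ i j, 1 ≤ Γ i j ∧ Γ i j ≤ 6)
    (hrow : ∀ i, ∀ j j' : Fin 3, j < j' → Γ i j < Γ i j')
    (hcol : ∀ i i' : Fin (2 * k), i ≤ i' → ∀ j, Γ i j ≤ Γ i' j)
    (hcount : ∀ t : ℕ, 1 ≤ t → t ≤ 6 →
      (Finset.univ.filter fun p : Fin (2 * k) × Fin 3 => Γ p.1 p.2 = t).card = k)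
    (hfirst : (Γ ⟨0, by omega⟩ 0, Γ ⟨0, by omega⟩ 1, Γ ⟨0, by omega⟩ 2) = (1, 3, 5)) :
    (Γ ⟨2 * k - 1, by omega⟩ 0, Γ ⟨2 * k - 1, by omega⟩ 1, Γ ⟨2 * k - 1, by omega⟩ 2)
      = (2, 4, 6) := by
  obtain ⟨h00, h01, h02⟩ : Γ ⟨0, by omega⟩ 0 = 1 ∧ Γ ⟨0, by omega⟩ 1 = 3 ∧
      Γ ⟨0, by omega⟩ 2 = 5 := by
    simpa [Prod.ext_iff] using hfirst
  have hz : ∀ i : Fin (2 * k), (⟨0, by omega⟩ : Fin (2 * k)) ≤ i := by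
    intro i; simp [Fin.le_def]
  have hb1 : ∀ i, 3 ≤ Γ i 1 := by
    intro i; have h := hcol ⟨0, by omega⟩ i (hz i) 1; rw [h01] at h; exact h
  have hb2 : ∀ i, 5 ≤ Γ i 2 := by
    intro i; have h := hcol ⟨0, by omega⟩ i (hz i) 2; rw [h02] at h; exact h
  -- generic counting step: if values a and a+1 only occur in column c, then
  -- column c consists only of values a and a+1
  have key : ∀ (c : Fin 3) (a : ℕ),
      (∀ p : Fin (2 * k) × Fin 3, Γ p.1 p.2 = a → p.2 = c) →
      (∀ p : Fin (2 * k) × Fin 3, Γ p.1 p.2 = a + 1 → p.2 = c) →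
      1 ≤ a → a + 1 ≤ 6 → ∀ i, Γ i c ≤ a + 1 := by
    intro c a ha hb h1 h6 i
    set C : Finset (Fin (2 * k) × Fin 3) := univ.filter fun p => p.2 = c with hC
    set Sa : Finset (Fin (2 * k) × Fin 3) := univ.filter fun p => Γ p.1 p.2 = a with hSa
    set Sb : Finset (Fin (2 * k) × Fin 3) :=
      univ.filter fun p => Γ p.1 p.2 = a + 1 with hSb
    have hCimg : C = univ.image fun i : Fin (2 * k) => (i, c) := by
      ext ⟨x, y⟩
      simp only [hC, mem_filter, mem_univ, true_and, mem_image, Prod.mk.injEq]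
      constructor
      · rintro rfl; exact ⟨x, rfl, rfl⟩
      · rintro ⟨z, rfl, rfl⟩; rfl
    have hCcard : C.card = 2 * k := by
      rw [hCimg, Finset.card_image_of_injective _ (fun x y h => by
        simpa using congrArg Prod.fst h)]
      simp
    have hsub : Sa ∪ Sb ⊆ C := by
      intro p hp
      simp only [hSa, hSb, mem_union, mem_filter, mem_univ, true_and] at hp
      simp only [hC, mem_filter, mem_univ, true_and]
      rcases hp with hp | hp
      · exact ha p hp
      · exact hb p hp
    have hdisj : Disjoint Sa Sb := by
      rw [Finset.disjoint_left]
      intro p hpa hpb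
      simp only [hSa, hSb, mem_filter, mem_univ, true_and] at hpa hpb
      omega
    have hcard : (Sa ∪ Sb).card = 2 * k := by
      rw [Finset.card_union_of_disjoint hdisj, hSa, hSb,
        hcount a h1 (by omega), hcount (a + 1) (by omega) h6]
      ring
    have heq : Sa ∪ Sb = C :=
      Finset.eq_of_subset_of_card_le hsub (by omega)
    have hi : (i, c) ∈ Sa ∪ Sb := by
      rw [heq]; simp [hC]
    simp only [hSa, hSb, mem_union, mem_filter, mem_univ, true_and] at hi
    omega
  have hcol0 : ∀ i, Γ i 0 ≤ 2 := by
    refine key 0 1 ?_ ?_ le_rfl (by omega)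
    all_goals
      rintro ⟨i, j⟩ hp
      fin_cases j
      · rfl
      · exact absurd hp (by have := hb1 i; simp at hp ⊢; omega)
      · exact absurd hp (by have := hb2 i; simp at hp ⊢; omega)
  have hcol1 : ∀ i, Γ i 1 ≤ 4 := by
    refine key 1 3 ?_ ?_ (by omega) (by omega)
    all_goals
      rintro ⟨i, j⟩ hp
      fin_cases j
      · exact absurd hp (by have := hcol0 i; simp at hp ⊢; omega)
      · rfl
      · exact absurd hp (by have := hb2 i; simp at hp ⊢; omega)
  -- existence of each of 2, 4, 6, necessarily in columns 0, 1, 2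
  have hex : ∀ t : ℕ, 1 ≤ t → t ≤ 6 →
      ∃ p : Fin (2 * k) × Fin 3, Γ p.1 p.2 = t := by
    intro t h1 h6
    have : (univ.filter fun p : Fin (2 * k) × Fin 3 => Γ p.1 p.2 = t).Nonempty := by
      rw [← Finset.card_pos, hcount t h1 h6]; omega
    obtain ⟨p, hp⟩ := this
    exact ⟨p, (mem_filter.mp hp).2⟩
  have hlast : ∀ i : Fin (2 * k), i ≤ ⟨2 * k - 1, by omega⟩ := by
    intro i; have := i.2; simp [Fin.le_def]; omega
  obtain ⟨⟨i2, j2⟩, h2⟩ := hex 2 (by omega) (by omega)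
  obtain ⟨⟨i4, j4⟩, h4⟩ := hex 4 (by omega) (by omega)
  obtain ⟨⟨i6, j6⟩, h6⟩ := hex 6 (by omega) (by omega)
  have e2 : Γ i2 0 = 2 := by
    fin_cases j2
    · exact h2
    · exact absurd h2 (by have := hb1 i2; simp at h2 ⊢; omega)
    · exact absurd h2 (by have := hb2 i2; simp at h2 ⊢; omega)
  have e4 : Γ i4 1 = 4 := by
    fin_cases j4
    · exact absurd h4 (by have := hcol0 i4; simp at h4 ⊢; omega)
    · exact h4
    · exact absurd h4 (by have := hb2 i4; simp at h4 ⊢; omega)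
  have e6 : Γ i6 2 = 6 := by
    fin_cases j6
    · exact absurd h6 (by have := hcol0 i6; simp at h6 ⊢; omega)
    · exact absurd h6 (by have := hcol1 i6; simp at h6 ⊢; omega)
    · exact h6
  have l0 := hcol i2 ⟨2 * k - 1, by omega⟩ (hlast i2) 0
  have l1 := hcol i4 ⟨2 * k - 1, by omega⟩ (hlast i4) 1
  have l2 := hcol i6 ⟨2 * k - 1, by omega⟩ (hlast i6) 2
  have u0 := hcol0 ⟨2 * k - 1, by omega⟩
  have u1 := hcol1 ⟨2 * k - 1, by omega⟩
  have u2 := (hval ⟨2 * k - 1, by omega⟩ 2).2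
  simp only [Prod.mk.injEq]
  omega
end

section
/- Let k ≥ 1 and let Γ be a 4k × 3 tableau with entries in {1,…,6}, strictly increasing rows, non-decreasing columns, no row containing both t and 7−t for any t, and each value 1,…,6 appearing exactly 2k times. Then row 1 of Γ is one of (1,2,3), (1,2,4), (1,3,5). -/
/-!
The corner entry is the minimum of the tableau, so it is `1`. If the second entry of the first
row were at least `4`, every value `1, 2, 3` would be confined to the first column, which has
only `4k` cells for `6k` occurrences. So the first row is `(1, b, c)` with `b ∈ {2, 3}`, and the
rule against `t, 7 - t` in one row excludes `c = 6` and `c = 7 - b`.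
-/

open Finset

theorem le_apply_of_le {ι κ : Type*} [Preorder ι] [Preorder κ] {Γ : ι → κ → ℕ}
    (hrow : ∀ i, Monotone (Γ i)) (hcol : ∀ j, Monotone (Γ · j)) {i₀ i : ι} {j₀ j : κ}
    (hi : i₀ ≤ i) (hj : j₀ ≤ j) :
    Γ i₀ j₀ ≤ Γ i j :=
  (hcol j₀ hi).trans (hrow i hj)

theorem card_le_card_of_forall_snd_eq {ι κ : Type*} [Fintype ι] {s : Finset (ι × κ)} {j : κ}
    (h : ∀ p ∈ s, p.2 = j) : #s ≤ Fintype.card ι :=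
  card_le_card_of_injOn Prod.fst (fun _ _ => mem_coe.2 (mem_univ _))
    fun p hp q hq hpq => Prod.ext hpq ((h p hp).trans (h q hq).symm)

theorem card_filter_mem_le_card_of_lt {ι : Type*} [Preorder ι] [Fintype ι] {n : ℕ}
    {Γ : ι → Fin (n + 2) → ℕ}
    (hrow : ∀ i, Monotone (Γ i)) (hcol : ∀ j, Monotone (Γ · j)) {i₀ : ι}
    (hi₀ : ∀ i, i₀ ≤ i) {T : Finset ℕ} (hT : ∀ t ∈ T, t < Γ i₀ 1) :
    #{p : ι × Fin (n + 2) | Γ p.1 p.2 ∈ T} ≤ Fintype.card ι := by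
  refine card_le_card_of_forall_snd_eq (j := 0) fun ⟨i, j⟩ hp => ?_
  by_contra hj
  have hmem : Γ i j ∈ T := (mem_filter.1 hp).2
  have := le_apply_of_le hrow hcol (hi₀ i) (Fin.one_le_of_ne_zero hj)
  exact absurd (hT _ hmem) (not_lt.2 this)

theorem card_filter_mem_eq_card_mul {α β : Type*} [Fintype α] [DecidableEq β] {f : α → β}
    {T : Finset β} {c : ℕ} (h : ∀ t ∈ T, #{a | f a = t} = c) :
    #{a | f a ∈ T} = #T * c := by
  rw [card_eq_sum_card_fiberwise (s := {a | f a ∈ T}) fun a ha => (mem_filter.1 ha).2,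
    ← smul_eq_mul, ← sum_const]
  refine sum_congr rfl fun t ht => ?_
  rw [filter_filter, ← h t ht]
  congr 1
  exact filter_congr fun a _ => ⟨And.right, fun hat => ⟨hat ▸ ht, hat⟩⟩

/-- For a `4k × 3` tableau with entries in `{1,…,6}`, strictly increasing rows,
non-decreasing columns, no row containing both `t` and `7 - t`, and each value
appearing exactly `2k` times: the first row is one of `(1,2,3)`, `(1,2,4)`,
`(1,3,5)`. -/
theorem spin7_P3_first_row (k : ℕ) (hk : 1 ≤ k) (Γ : Fin (4 * k) → Fin 3 → ℕ)
    (hval : ∀ i j, 1 ≤ Γ i j ∧ Γ i j ≤ 6)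
    (hrow : ∀ i, ∀ j j' : Fin 3, j < j' → Γ i j < Γ i j')
    (hcol : ∀ i i' : Fin (4 * k), i ≤ i' → ∀ j, Γ i j ≤ Γ i' j)
    (hno : ∀ i, ∀ t : ℕ, 1 ≤ t → t ≤ 6 → ∀ j j' : Fin 3, Γ i j = t → Γ i j' ≠ 7 - t)
    (hcount : ∀ t : ℕ, 1 ≤ t → t ≤ 6 →
      (Finset.univ.filter fun p : Fin (4 * k) × Fin 3 => Γ p.1 p.2 = t).card = 2 * k) :
    (Γ ⟨0, by omega⟩ 0, Γ ⟨0, by omega⟩ 1, Γ ⟨0, by omega⟩ 2) ∈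
      ({(1,2,3), (1,2,4), (1,3,5)} : Set (ℕ × ℕ × ℕ)) := by
  set z : Fin (4 * k) := ⟨0, by omega⟩
  have hz : ∀ i, z ≤ i := fun i => Nat.zero_le i.val
  have hrow' : ∀ i, Monotone (Γ i) := fun i => StrictMono.monotone fun _ _ => hrow i _ _
  have hcol' : ∀ j, Monotone (Γ · j) := fun j _ _ h => hcol _ _ h j
  have h1 : Γ z 0 = 1 := by
    obtain ⟨⟨i, j⟩, hij⟩ := card_pos.1 (by rw [hcount 1 le_rfl (by norm_num)]; omega)
    have := le_apply_of_le hrow' hcol' (hz i) (Fin.zero_le j)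
    have := (hval z 0).1
    simp only [mem_filter, mem_univ, true_and] at hij
    omega
  have h4 : Γ z 1 < 4 := by
    by_contra! h
    have hle := card_filter_mem_le_card_of_lt hrow' hcol' hz (T := Icc 1 3)
      fun t ht => by rw [mem_Icc] at ht; omega
    rw [card_filter_mem_eq_card_mul fun t ht =>
      hcount t (mem_Icc.1 ht).1 ((mem_Icc.1 ht).2.trans (by norm_num))] at hle
    simp only [Nat.card_Icc, Fintype.card_fin] at hle
    omega
  have h6 : Γ z 2 ≠ 6 := hno z 1 le_rfl (by norm_num) 0 2 h1
  have h7 : Γ z 2 ≠ 7 - Γ z 1 := hno z _ (hval z 1).1 (hval z 1).2 1 2 rfl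
  have := hrow z 0 1 (by decide)
  have := hrow z 1 2 (by decide)
  have := (hval z 2).2
  simp only [Set.mem_insert_iff, Set.mem_singleton_iff, Prod.mk.injEq]
  omega
end

section
/- For n even, every d-regular multigraph (loops allowed, loop counted once toward degree, with an even total number of loops) on n vertices admits a spanning subgraph in which every vertex has degree 1, provided d ≥ 1 is arbitrary, as can be derived via the bipartite double cover: the bipartite double cover of such a graph is a d-regular bipartite multigraph and hence 1-factorable. -/
open Finset

private lemma dc_exists_perm {n d : ℕ} (hd : 1 ≤ d) (m : Fin n → Fin n → ℕ)
    (hrow : ∀ i, ∑ j, m i j = d) (hcol : ∀ j, ∑ i, m i j = d) :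
    ∃ σ : Equiv.Perm (Fin n), ∀ i, 1 ≤ m i (σ i) := by
  classical
  have hall : ∀ s : Finset (Fin n),
      s.card ≤ (s.biUnion fun i => univ.filter fun j => 0 < m i j).card := by
    intro s
    set T := s.biUnion fun i => univ.filter fun j => 0 < m i j with hT
    have h2 : ∀ i ∈ s, ∑ j, m i j = ∑ j ∈ T, m i j := by
      intro i hi
      rw [← Finset.sum_subset (Finset.subset_univ T)]
      intro j _ hj
      by_contra h
      exact hj (Finset.mem_biUnion.2 ⟨i, hi, by simp [Nat.pos_of_ne_zero h]⟩)
    have h3 : d * s.card ≤ d * T.card := by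
      calc d * s.card = ∑ i ∈ s, ∑ j, m i j := by simp [hrow, mul_comm]
        _ = ∑ i ∈ s, ∑ j ∈ T, m i j := Finset.sum_congr rfl h2
        _ = ∑ j ∈ T, ∑ i ∈ s, m i j := Finset.sum_comm
        _ ≤ ∑ j ∈ T, ∑ i, m i j :=
            Finset.sum_le_sum fun j _ =>
              Finset.sum_le_sum_of_subset (Finset.subset_univ s)
        _ = d * T.card := by simp [hcol, mul_comm]
    exact Nat.le_of_mul_le_mul_left h3 hd
  obtain ⟨f, hinj, hf⟩ := (Finset.all_card_le_biUnion_card_iff_exists_injective _).1 hall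
  refine ⟨Equiv.ofBijective f (Finite.injective_iff_bijective.1 hinj), fun i => ?_⟩
  have := hf i
  simp only [Finset.mem_filter] at this
  exact this.2

private lemma dc_decompose {n : ℕ} : ∀ (d : ℕ) (m : Fin n → Fin n → ℕ),
    (∀ i, ∑ j, m i j = d) → (∀ j, ∑ i, m i j = d) →
    ∃ F : Fin d → Fin n → Fin n → ℕ,
      (∀ i j, ∑ t, F t i j = m i j) ∧
      (∀ t i, ∑ j, F t i j = 1) ∧
      (∀ t j, ∑ i, F t i j = 1) := by
  intro d
  induction d with
  | zero =>
    intro m hrow hcol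
    refine ⟨fun t => t.elim0, fun i j => ?_, fun t => t.elim0, fun t => t.elim0⟩
    have h0 : m i j = 0 := by
      have := hrow i
      exact (Finset.sum_eq_zero_iff.1 this) j (Finset.mem_univ j)
    simp [h0]
  | succ d ih =>
    intro m hrow hcol
    classical
    obtain ⟨σ, hσ⟩ := dc_exists_perm (Nat.succ_le_succ (Nat.zero_le d)) m hrow hcol
    set P : Fin n → Fin n → ℕ := fun i j => if σ i = j then 1 else 0 with hP
    have hPle : ∀ i j, P i j ≤ m i j := by
      intro i j
      by_cases h : σ i = j
      · subst h; simpa [hP] using hσ i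
      · simp [hP, h]
    have hProw : ∀ i, ∑ j, P i j = 1 := by intro i; simp [hP]
    have hPcol : ∀ j, ∑ i, P i j = 1 := by
      intro j
      have : ∀ i, P i j = if i = σ.symm j then 1 else 0 := by
        intro i
        simp only [hP]
        congr 1
        simp [Equiv.eq_symm_apply, eq_comm]
      simp [this]
    set m' : Fin n → Fin n → ℕ := fun i j => m i j - P i j with hm'
    have hrecover : ∀ i j, P i j + m' i j = m i j := fun i j =>
      Nat.add_sub_cancel' (hPle i j)
    have hrow' : ∀ i, ∑ j, m' i j = d := by
      intro i
      have h : (∑ j, P i j) + ∑ j, m' i j = ∑ j, m i j := by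
        rw [← Finset.sum_add_distrib]
        exact Finset.sum_congr rfl fun j _ => hrecover i j
      rw [hProw, hrow] at h
      omega
    have hcol' : ∀ j, ∑ i, m' i j = d := by
      intro j
      have h : (∑ i, P i j) + ∑ i, m' i j = ∑ i, m i j := by
        rw [← Finset.sum_add_distrib]
        exact Finset.sum_congr rfl fun i _ => hrecover i j
      rw [hPcol, hcol] at h
      omega
    obtain ⟨F', hF1, hF2, hF3⟩ := ih m' hrow' hcol'
    refine ⟨Fin.cons P F', ?_, ?_, ?_⟩
    · intro i j
      rw [Fin.sum_univ_succ]
      simp only [Fin.cons_zero, Fin.cons_succ]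
      rw [hF1, hrecover]
    · intro t i
      refine Fin.cases ?_ (fun t => ?_) t
      · simpa using hProw i
      · simpa using hF2 t i
    · intro t j
      refine Fin.cases ?_ (fun t => ?_) t
      · simpa using hPcol j
      · simpa using hF3 t j

/-- Bipartite double cover of a `d`-regular multigraph `m` on `n` vertices
(`n` even, loops allowed, a loop contributing degree 1, with an even total
number of loops): viewing `m i j` as the multiplicity of the edge `(Mᵢ, Nⱼ)` of
the double cover (each non-loop edge `(vᵢ, vⱼ)` giving the two edges
`(Mᵢ, Nⱼ)`, `(Mⱼ, Nᵢ)` and each loop at `vᵢ` the edge `(Mᵢ, Nᵢ)`), the double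
cover is a `d`-regular bipartite multigraph, hence it decomposes into `d`
perfect matchings. -/
theorem double_cover_one_factorable (n d : ℕ) (hn : Even n) (hd : 1 ≤ d)
    (m : Fin n → Fin n → ℕ) (hsym : ∀ u v, m u v = m v u)
    (hloops : Even (∑ v, m v v))
    (hreg : ∀ v, ∑ u, m v u = d) :
    (∀ i, ∑ j, m i j = d) ∧ (∀ j, ∑ i, m i j = d) ∧
    ∃ F : Fin d → Fin n → Fin n → ℕ,
      (∀ i j, ∑ t, F t i j = m i j) ∧
      (∀ t i, ∑ j, F t i j = 1) ∧
      (∀ t j, ∑ i, F t i j = 1) := by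
  have hcol : ∀ j, ∑ i, m i j = d := by
    intro j
    calc ∑ i, m i j = ∑ i, m j i := by
          exact Finset.sum_congr rfl fun i _ => hsym i j
      _ = d := hreg j
  exact ⟨hreg, hcol, dc_decompose d m hreg hcol⟩
end

section
/- Let n ≥ 1, k ≥ 1, r₁, r₂ ≥ 1 and s = r₁ + 2r₂. Suppose G is a graph on n vertices with loops allowed (loop contributing degree 1) having exactly k·n·r₁ loops and every vertex of degree exactly k·s. If s is even (equivalently r₁ is even), then G has a spanning subgraph in which every vertex has degree exactly s. -/
open Finset

namespace SFactorProof

/-- Pairing lemma: a 0/1 weight with even sum is the degree sequence of a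
symmetric loopless multigraph. -/
lemma pairing {n : ℕ} : ∀ (N : ℕ) (w : Fin n → ℕ), (∑ v, w v = N) → (∀ v, w v ≤ 1) →
    Even (∑ v, w v) →
    ∃ p : Fin n → Fin n → ℕ, (∀ u v, p u v = p v u) ∧ (∀ v, p v v = 0) ∧
      (∀ v, ∑ u, p v u = w v) := by
  intro N
  induction N using Nat.strong_induction_on with
  | _ N ih =>
    intro w hN hw1 hev
    rcases Nat.eq_zero_or_pos N with h0 | hpos
    · subst h0
      refine ⟨fun _ _ => 0, by simp, by simp, ?_⟩
      intro v
      have hv := Finset.sum_eq_zero_iff.mp hN v (mem_univ v)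
      simp [hv]
    · have hex : ∃ v, w v = 1 := by
        by_contra h
        push_neg at h
        have hz : ∀ v ∈ (univ : Finset (Fin n)), w v = 0 := by
          intro v _; have := hw1 v; have := h v; omega
        have := Finset.sum_eq_zero hz
        omega
      obtain ⟨v1, hv1⟩ := hex
      have hex2 : ∃ v2, v2 ≠ v1 ∧ w v2 = 1 := by
        by_contra h
        push_neg at h
        have hsum : ∑ v, w v = w v1 := by
          refine Finset.sum_eq_single v1 ?_ ?_
          · intro u _ hu; have := hw1 u; have := h u hu; omega
          · intro h'; exact absurd (mem_univ v1) h'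
        rw [hsum, hv1] at hev
        exact (Nat.not_even_iff_odd.mpr odd_one) hev
      obtain ⟨v2, hv21, hv2⟩ := hex2
      have hv12 : v1 ≠ v2 := fun h => hv21 h.symm
      set q : Fin n → Fin n → ℕ := fun u v =>
        (if u = v1 ∧ v = v2 then 1 else 0) + (if u = v2 ∧ v = v1 then 1 else 0) with hq
      have hqrow : ∀ v, ∑ u, q v u = (if v = v1 ∨ v = v2 then 1 else 0) := by
        intro v
        rw [Finset.sum_add_distrib]
        by_cases h1 : v = v1
        · have h2 : ¬ v = v2 := by rw [h1]; exact hv12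
          simp [q, h1, h2, hv12, hv21, Finset.sum_ite_eq' univ]
        · by_cases h2 : v = v2 <;> simp [q, h1, h2, hv12, hv21, Finset.sum_ite_eq' univ]
      set w' : Fin n → ℕ := fun v => if v = v1 ∨ v = v2 then 0 else w v with hw'
      have hsplit : ∀ v, w v = w' v + (if v = v1 ∨ v = v2 then 1 else 0) := by
        intro v
        by_cases h : v = v1 ∨ v = v2
        · simp only [w', if_pos h]
          rcases h with h | h
          · rw [h, hv1]
          · rw [h, hv2]
        · simp [w', h]
      have hindsum : ∑ v, (if v = v1 ∨ v = v2 then (1:ℕ) else 0) = 2 := by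
        have heq : ∀ v, (if v = v1 ∨ v = v2 then (1:ℕ) else 0)
            = (if v = v1 then 1 else 0) + (if v = v2 then 1 else 0) := by
          intro v
          by_cases h1 : v = v1
          · have h2 : ¬ v = v2 := by rw [h1]; exact hv12
            simp [h1, h2, hv12]
          · by_cases h2 : v = v2 <;> simp [h1, h2, hv12, hv21]
        rw [Finset.sum_congr rfl fun v _ => heq v, Finset.sum_add_distrib]
        simp [Finset.sum_ite_eq' univ]
      have hN' : ∑ v, w' v = N - 2 := by
        have : ∑ v, w v = ∑ v, w' v + 2 := by
          rw [Finset.sum_congr rfl fun v _ => hsplit v, Finset.sum_add_distrib, hindsum]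
        omega
      have h2N : 2 ≤ N := by
        rw [hN] at hev
        rcases hev with ⟨t, ht⟩; omega
      obtain ⟨p', hp'sym, hp'diag, hp'row⟩ := ih (N - 2) (by omega) w' hN'
        (fun v => by by_cases h : v = v1 ∨ v = v2 <;> simp [w', h, hw1 v])
        (by rw [hN']; rw [hN] at hev; rcases hev with ⟨t, ht⟩
            exact ⟨t - 1, by omega⟩)
      refine ⟨fun u v => p' u v + q u v, ?_, ?_, ?_⟩
      · intro u v
        show p' u v + q u v = p' v u + q v u
        rw [hp'sym]
        congr 1
        simp only [q]
        rw [add_comm]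
        congr 1 <;> (apply if_congr _ rfl rfl) <;> constructor <;>
          (rintro ⟨ha, hb⟩; exact ⟨hb, ha⟩)
      · intro v
        show p' v v + q v v = 0
        rw [hp'diag]
        have h1 : ¬ (v = v1 ∧ v = v2) := by
          rintro ⟨ha, hb⟩; exact hv12 (by rw [← ha, ← hb])
        have h2 : ¬ (v = v2 ∧ v = v1) := by
          rintro ⟨ha, hb⟩; exact hv21 (by rw [← ha, ← hb])
        simp [q, h1, h2]
      · intro v
        show ∑ u, (p' v u + q v u) = w v
        rw [Finset.sum_add_distrib, hp'row, hqrow]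
        exact (hsplit v).symm

/-- Hall: a `t`-regular bipartite multigraph has a perfect matching. -/
lemma hall_perm {n t : ℕ} (ht : 1 ≤ t) (D : Fin n → Fin n → ℕ)
    (hrow : ∀ v, ∑ u, D v u = t) (hcol : ∀ v, ∑ u, D u v = t) :
    ∃ π : Equiv.Perm (Fin n), ∀ v, 1 ≤ D v (π v) := by
  classical
  have hall : ∀ s : Finset (Fin n),
      s.card ≤ (s.biUnion (fun v => univ.filter (fun u => 1 ≤ D v u))).card := by
    intro s
    set T := s.biUnion (fun v => univ.filter (fun u => 1 ≤ D v u)) with hT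
    have hzero : ∀ u, u ∉ T → ∀ v ∈ s, D v u = 0 := by
      intro u hu v hv
      by_contra h
      exact hu (Finset.mem_biUnion.mpr ⟨v, hv, Finset.mem_filter.mpr
        ⟨mem_univ u, by omega⟩⟩)
    have h1 : t * s.card = ∑ v ∈ s, ∑ u, D v u := by
      rw [Finset.sum_congr rfl fun v _ => hrow v, Finset.sum_const, smul_eq_mul, mul_comm]
    have h2 : ∑ v ∈ s, ∑ u, D v u = ∑ u ∈ T, ∑ v ∈ s, D v u := by
      rw [Finset.sum_comm]
      refine (Finset.sum_subset (Finset.subset_univ T) ?_).symm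
      intro u _ hu
      exact Finset.sum_eq_zero fun v hv => hzero u hu v hv
    have h3 : ∑ u ∈ T, ∑ v ∈ s, D v u ≤ ∑ u ∈ T, t := by
      refine Finset.sum_le_sum fun u _ => ?_
      rw [← hcol u]
      exact Finset.sum_le_sum_of_subset (Finset.subset_univ s)
    rw [Finset.sum_const, smul_eq_mul, mul_comm] at h3
    have := h1 ▸ h2 ▸ h3
    exact Nat.le_of_mul_le_mul_left this (by omega)
  obtain ⟨φ, hinj, hmem⟩ :=
    (Finset.all_card_le_biUnion_card_iff_existsInjective'
      (fun v : Fin n => univ.filter (fun u => 1 ≤ D v u))).mp hall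
  refine ⟨Equiv.ofBijective φ (Finite.injective_iff_bijective.mp hinj), fun v => ?_⟩
  have := hmem v
  rw [Finset.mem_filter] at this
  exact this.2

/-- Extract a sum of `j` perfect matchings from a doubly `t`-regular
nonnegative integer matrix, for any `j ≤ t`. -/
lemma extract {n : ℕ} (j : ℕ) : ∀ (t : ℕ) (D : Fin n → Fin n → ℕ), j ≤ t →
    (∀ v, ∑ u, D v u = t) → (∀ v, ∑ u, D u v = t) →
    ∃ C : Fin n → Fin n → ℕ, (∀ u v, C u v ≤ D u v) ∧ (∀ v, ∑ u, C v u = j) ∧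
      (∀ v, ∑ u, C u v = j) := by
  induction j with
  | zero =>
    intro t D _ _ _
    exact ⟨fun _ _ => 0, fun _ _ => Nat.zero_le _, by simp, by simp⟩
  | succ j ih =>
    intro t D hjt hrow hcol
    have ht : 1 ≤ t := by omega
    obtain ⟨π, hπ⟩ := hall_perm ht D hrow hcol
    set M : Fin n → Fin n → ℕ := fun v u => if u = π v then 1 else 0 with hM
    have hMle : ∀ v u, M v u ≤ D v u := by
      intro v u
      by_cases h : u = π v
      · subst h; simpa [M] using hπ v
      · simp [M, h]
    have hMrow : ∀ v, ∑ u, M v u = 1 := by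
      intro v; simp [M, Finset.sum_ite_eq' univ]
    have hMcol : ∀ v, ∑ u, M u v = 1 := by
      intro v
      have hre : ∑ u, M u v = ∑ u : Fin n, (fun w => if v = w then (1:ℕ) else 0) (π u) := by
        refine Finset.sum_congr rfl fun u _ => ?_
        simp only [M, eq_comm]
      rw [hre, Equiv.sum_comp π (fun w => if v = w then (1:ℕ) else 0)]
      simp [Finset.sum_ite_eq univ]
    set D' : Fin n → Fin n → ℕ := fun v u => D v u - M v u with hD'
    have hrow' : ∀ v, ∑ u, D' v u = t - 1 := by
      intro v
      rw [show ∑ u, D' v u = ∑ u, (D v u - M v u) from rfl,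
        Finset.sum_tsub_distrib _ (fun u _ => hMle v u), hrow v, hMrow v]
    have hcol' : ∀ v, ∑ u, D' u v = t - 1 := by
      intro v
      rw [show ∑ u, D' u v = ∑ u, (D u v - M u v) from rfl,
        Finset.sum_tsub_distrib _ (fun u _ => hMle u v), hcol v, hMcol v]
    obtain ⟨C', hC'le, hC'row, hC'col⟩ := ih (t - 1) D' (by omega) hrow' hcol'
    refine ⟨fun v u => C' v u + M v u, ?_, ?_, ?_⟩
    · intro u v
      show C' u v + M u v ≤ D u v
      have h1 : C' u v ≤ D u v - M u v := hC'le u v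
      have h2 : M u v ≤ D u v := hMle u v
      omega
    · intro v
      show ∑ u, (C' v u + M v u) = j + 1
      rw [show ∑ u, (C' v u + M v u) = ∑ u, C' v u + ∑ u, M v u from
        Finset.sum_add_distrib, hC'row v, hMrow v]
    · intro v
      show ∑ u, (C' u v + M u v) = j + 1
      rw [show ∑ u, (C' u v + M u v) = ∑ u, C' u v + ∑ u, M u v from
        Finset.sum_add_distrib, hC'col v, hMcol v]
/-- One step for the Eulerian-orientation lemma: in a nonempty loopless
symmetric multigraph with all degrees even, there is a balanced partial
orientation `a` (a closed walk / doubled edge) fitting inside `m0`. -/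
lemma exists_step {n : ℕ} (m0 : Fin n → Fin n → ℕ) (hd : ∀ v, m0 v v = 0)
    (hsym : ∀ u v, m0 u v = m0 v u) (heven : ∀ v, Even (∑ u, m0 v u))
    (hpos : 0 < ∑ v, ∑ u, m0 v u) :
    ∃ a : Fin n → Fin n → ℕ, (∀ v, a v v = 0) ∧ (∀ u v, a u v + a v u ≤ m0 u v) ∧
      (∀ v, ∑ u, a v u = ∑ u, a u v) ∧ 0 < ∑ v, ∑ u, a v u := by
  classical
  by_cases hA : ∃ x y, x ≠ y ∧ 2 ≤ m0 x y
  · obtain ⟨x, y, hxy, hm⟩ := hA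
    set a : Fin n → Fin n → ℕ :=
      fun u v => if (u = x ∧ v = y) ∨ (u = y ∧ v = x) then 1 else 0 with ha
    have hasym : ∀ u v, a u v = a v u := by
      intro u v
      simp only [a]
      apply if_congr _ rfl rfl
      constructor
      · rintro (⟨h1, h2⟩ | ⟨h1, h2⟩)
        · exact Or.inr ⟨h2, h1⟩
        · exact Or.inl ⟨h2, h1⟩
      · rintro (⟨h1, h2⟩ | ⟨h1, h2⟩)
        · exact Or.inr ⟨h2, h1⟩
        · exact Or.inl ⟨h2, h1⟩
    refine ⟨a, ?_, ?_, ?_, ?_⟩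
    · intro v
      have h1 : ¬ ((v = x ∧ v = y) ∨ (v = y ∧ v = x)) := by
        rintro (⟨h1, h2⟩ | ⟨h1, h2⟩) <;> exact hxy (by rw [← h1, ← h2])
      simp [a, h1]
    · intro u v
      rw [← hasym u v]
      by_cases h : (u = x ∧ v = y) ∨ (u = y ∧ v = x)
      · have h2 : 2 ≤ m0 u v := by
          rcases h with ⟨h1, h2⟩ | ⟨h1, h2⟩
          · rw [h1, h2]; exact hm
          · rw [h1, h2, hsym]; exact hm
        simp only [a, if_pos h]; omega
      · simp [a, h]
    · intro v
      exact Finset.sum_congr rfl fun u _ => hasym v u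
    · have h1 : a x y = 1 := by simp [a]
      have h2 : a x y ≤ ∑ u, a x u :=
        Finset.single_le_sum (fun _ _ => Nat.zero_le _) (mem_univ y)
      have h3 : ∑ u, a x u ≤ ∑ v, ∑ u, a v u :=
        Finset.single_le_sum (f := fun v => ∑ u, a v u)
          (fun _ _ => Nat.zero_le _) (mem_univ x)
      omega
  · -- all multiplicities ≤ 1 off the diagonal
    push_neg at hA
    have hsmall : ∀ x y, x ≠ y → m0 x y ≤ 1 := fun x y h => by have := hA x y h; omega
    -- a starting edge
    have hex : ∃ x y, 1 ≤ m0 x y := by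
      by_contra h
      push_neg at h
      have : ∑ v, ∑ u, m0 v u = 0 :=
        Finset.sum_eq_zero fun v _ => Finset.sum_eq_zero fun u _ => by have := h v u; omega
      omega
    obtain ⟨va, vb, hab⟩ := hex
    -- the walk-extension step
    have step : ∀ x y, 1 ≤ m0 x y → ∃ w, w ≠ x ∧ 1 ≤ m0 y w := by
      intro x y hxy
      by_contra hc
      push_neg at hc
      have hxny : x ≠ y := by
        intro h; rw [h, hd y] at hxy; omega
      have hz : ∀ u, u ≠ x → m0 y u = 0 := by
        intro u hu; have := hc u hu; omega
      have hsum : ∑ u, m0 y u = m0 y x := by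
        refine Finset.sum_eq_single x (fun u _ hu => hz u hu) ?_
        intro h'; exact absurd (mem_univ x) h'
      have h1 : m0 y x = 1 := by
        have := hsmall y x (Ne.symm hxny)
        have : 1 ≤ m0 y x := by rw [hsym]; exact hxy
        omega
      have := heven y
      rw [hsum, h1] at this
      exact (Nat.not_even_iff_odd.mpr odd_one) this
    -- build the walk
    set nxt : Fin n × Fin n → Fin n × Fin n := fun pr =>
      if h : ∃ w, w ≠ pr.1 ∧ 1 ≤ m0 pr.2 w then (pr.2, h.choose) else pr with hnxt
    set g : ℕ → Fin n × Fin n := fun k => nxt^[k] (va, vb) with hg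
    have hgsucc : ∀ k, g (k + 1) = nxt (g k) := by
      intro k
      simp only [g, Function.iterate_succ_apply']
    have hnext : ∀ pr : Fin n × Fin n, 1 ≤ m0 pr.1 pr.2 →
        (nxt pr).1 = pr.2 ∧ (nxt pr).2 ≠ pr.1 ∧ 1 ≤ m0 pr.2 (nxt pr).2 := by
      intro pr hpr
      have hE : ∃ w, w ≠ pr.1 ∧ 1 ≤ m0 pr.2 w := step _ _ hpr
      have hv : nxt pr = (pr.2, hE.choose) := by simp only [nxt, dif_pos hE]
      rw [hv]
      exact ⟨rfl, hE.choose_spec.1, hE.choose_spec.2⟩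
    have inv : ∀ k, 1 ≤ m0 (g k).1 (g k).2 := by
      intro k
      induction k with
      | zero => simpa [g] using hab
      | succ k ihk =>
        have h := hnext (g k) ihk
        rw [hgsucc k, h.1]
        exact h.2.2
    set f : ℕ → Fin n := fun k => (g k).1 with hf
    have hlink : ∀ k, f (k + 1) = (g k).2 := by
      intro k
      show (g (k+1)).1 = (g k).2
      rw [hgsucc k]
      exact (hnext (g k) (inv k)).1
    have hEdge : ∀ k, 1 ≤ m0 (f k) (f (k + 1)) := by
      intro k
      rw [hlink k]
      exact inv k
    have hnb : ∀ k, f (k + 2) ≠ f k := by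
      intro k
      have h1 : f (k + 2) = (g (k + 1)).2 := hlink (k + 1)
      have h2 : (g (k + 1)).2 ≠ (g k).1 := by
        rw [hgsucc k]
        exact (hnext (g k) (inv k)).2.1
      rw [h1]
      exact h2
    have hne : ∀ k, f k ≠ f (k + 1) := by
      intro k h
      have := hEdge k
      rw [← h, hd (f k)] at this
      omega
    -- pigeonhole: a repeated vertex
    have hP : ∃ j, ∃ i, i < j ∧ f i = f j := by
      have hcard : (univ : Finset (Fin n)).card < (Finset.range (n + 1)).card := by
        simp
      obtain ⟨x, -, y, -, hxy, hfxy⟩ :=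
        Finset.exists_ne_map_eq_of_card_lt_of_maps_to hcard
          (fun x _ => mem_univ (f x))
      rcases Nat.lt_or_ge x y with h | h
      · exact ⟨y, x, h, hfxy⟩
      · exact ⟨x, y, by omega, hfxy.symm⟩
    set j0 := Nat.find hP with hj0
    obtain ⟨i0, hij, hf0⟩ := Nat.find_spec hP
    rw [← hj0] at hij hf0
    have inj : ∀ p q, p < q → q < j0 → f p ≠ f q := by
      intro p q hpq hq hfp
      exact Nat.find_min hP hq ⟨p, hpq, hfp⟩
    -- the oriented cycle
    set a : Fin n → Fin n → ℕ := fun u v =>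
      ((Finset.Ico i0 j0).filter (fun t => f t = u ∧ f (t + 1) = v)).card with haa
    have hadiag : ∀ v, a v v = 0 := by
      intro v
      simp only [a, Finset.card_eq_zero]
      refine Finset.filter_eq_empty_iff.mpr ?_
      rintro t - ⟨h1, h2⟩
      exact hne t (by rw [h1, h2])
    have key : ∀ t t', t ∈ Finset.Ico i0 j0 → t' ∈ Finset.Ico i0 j0 → t < t' →
        (f t = f t' ∧ f (t + 1) = f (t' + 1)) ∨ (f t = f (t' + 1) ∧ f (t + 1) = f t') →
        False := by
      intro t t' ht ht' hlt hcase
      have ht'2 : t' < j0 := (Finset.mem_Ico.mp ht').2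
      rcases hcase with ⟨h1, h2⟩ | ⟨h1, h2⟩
      · exact inj t t' hlt ht'2 h1
      · rcases Nat.lt_or_ge (t + 1) t' with h | h
        · exact inj (t + 1) t' h ht'2 h2
        · have heq : t + 1 = t' := by omega
          subst heq
          exact hnb t h1.symm
    have abound : ∀ u v, a u v + a v u ≤ m0 u v := by
      intro u v
      rcases eq_or_ne u v with h | huv
      · subst h
        simp [hadiag]
      · set S1 := (Finset.Ico i0 j0).filter (fun t => f t = u ∧ f (t + 1) = v) with hS1
        set S2 := (Finset.Ico i0 j0).filter (fun t => f t = v ∧ f (t + 1) = u) with hS2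
        have hdisj : Disjoint S1 S2 := by
          rw [Finset.disjoint_left]
          intro t h1 h2
          obtain ⟨-, hu1, -⟩ := Finset.mem_filter.mp h1
          obtain ⟨-, hu2, -⟩ := Finset.mem_filter.mp h2
          exact huv (by rw [← hu1, hu2])
        have hunion : a u v + a v u = (S1 ∪ S2).card :=
          (Finset.card_union_of_disjoint hdisj).symm
        have hle1 : (S1 ∪ S2).card ≤ 1 := by
          rw [Finset.card_le_one]
          intro s hs t ht
          by_contra hst
          have hs' := Finset.mem_union.mp hs
          have ht' := Finset.mem_union.mp ht
          have hmem : ∀ x, x ∈ S1 ∪ S2 → x ∈ Finset.Ico i0 j0 := by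
            intro x hx
            rcases Finset.mem_union.mp hx with h | h
            · exact (Finset.mem_filter.mp h).1
            · exact (Finset.mem_filter.mp h).1
          have hcases : ∀ x y : ℕ, x ∈ S1 ∪ S2 → y ∈ S1 ∪ S2 → x < y → False := by
            intro x y hx hy hxy
            refine key x y (hmem x hx) (hmem y hy) hxy ?_
            rcases Finset.mem_union.mp hx with h | h <;>
              rcases Finset.mem_union.mp hy with h' | h'
            · obtain ⟨-, p1, p2⟩ := Finset.mem_filter.mp h
              obtain ⟨-, q1, q2⟩ := Finset.mem_filter.mp h'
              exact Or.inl ⟨by rw [p1, q1], by rw [p2, q2]⟩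
            · obtain ⟨-, p1, p2⟩ := Finset.mem_filter.mp h
              obtain ⟨-, q1, q2⟩ := Finset.mem_filter.mp h'
              exact Or.inr ⟨by rw [p1, q2], by rw [p2, q1]⟩
            · obtain ⟨-, p1, p2⟩ := Finset.mem_filter.mp h
              obtain ⟨-, q1, q2⟩ := Finset.mem_filter.mp h'
              exact Or.inr ⟨by rw [p1, q2], by rw [p2, q1]⟩
            · obtain ⟨-, p1, p2⟩ := Finset.mem_filter.mp h
              obtain ⟨-, q1, q2⟩ := Finset.mem_filter.mp h'
              exact Or.inl ⟨by rw [p1, q1], by rw [p2, q2]⟩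
          rcases Nat.lt_or_ge s t with h | h
          · exact hcases s t hs ht h
          · exact hcases t s ht hs (by omega)
        rcases Nat.eq_zero_or_pos (S1 ∪ S2).card with h0 | hposu
        · rw [hunion, h0]
          exact Nat.zero_le _
        · obtain ⟨t, htm⟩ := Finset.card_pos.mp hposu
          have h1m : 1 ≤ m0 u v := by
            rcases Finset.mem_union.mp htm with h | h
            · obtain ⟨-, p1, p2⟩ := Finset.mem_filter.mp h
              rw [← p1, ← p2]
              exact hEdge t
            · obtain ⟨-, p1, p2⟩ := Finset.mem_filter.mp h
              rw [← p1, ← p2, hsym]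
              exact hEdge t
          omega
    have hout : ∀ v, ∑ u, a v u = ((Finset.Ico i0 j0).filter (fun t => f t = v)).card := by
      intro v
      have h1 : ∀ u, a v u
          = ∑ t ∈ Finset.Ico i0 j0, (if f t = v ∧ f (t + 1) = u then (1:ℕ) else 0) := by
        intro u; exact Finset.card_filter _ _
      rw [Finset.sum_congr rfl fun u _ => h1 u, Finset.sum_comm, Finset.card_filter]
      refine Finset.sum_congr rfl fun t _ => ?_
      by_cases h : f t = v
      · simp [h]
      · simp [h]
    have hin : ∀ v, ∑ u, a u v
        = ((Finset.Ico i0 j0).filter (fun t => f (t + 1) = v)).card := by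
      intro v
      have h1 : ∀ u, a u v
          = ∑ t ∈ Finset.Ico i0 j0, (if f t = u ∧ f (t + 1) = v then (1:ℕ) else 0) := by
        intro u; exact Finset.card_filter _ _
      rw [Finset.sum_congr rfl fun u _ => h1 u, Finset.sum_comm, Finset.card_filter]
      refine Finset.sum_congr rfl fun t _ => ?_
      by_cases h : f (t + 1) = v
      · simp [h]
      · simp [h]
    have hshift : ∀ v, ((Finset.Ico i0 j0).filter (fun t => f t = v)).card
        = ((Finset.Ico i0 j0).filter (fun t => f (t + 1) = v)).card := by
      intro v
      rw [Finset.card_filter, Finset.card_filter]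
      have e2 : ∑ t ∈ Finset.Ico i0 j0, (if f (t + 1) = v then (1:ℕ) else 0)
          = ∑ t ∈ Finset.Ico (i0 + 1) (j0 + 1), (if f t = v then (1:ℕ) else 0) := by
        rw [Finset.sum_Ico_eq_sum_range, Finset.sum_Ico_eq_sum_range]
        have hd' : j0 + 1 - (i0 + 1) = j0 - i0 := by omega
        rw [hd']
        refine Finset.sum_congr rfl fun r _ => ?_
        have : i0 + r + 1 = i0 + 1 + r := by omega
        rw [this]
      rw [e2, Finset.sum_Ico_succ_top (show i0 + 1 ≤ j0 by omega)]
      rw [Finset.sum_eq_sum_Ico_succ_bot hij]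
      rw [hf0]
      omega
    have abal : ∀ v, ∑ u, a v u = ∑ u, a u v := fun v => by
      rw [hout v, hin v, hshift v]
    have apos : 0 < ∑ v, ∑ u, a v u := by
      have hmem : i0 ∈ (Finset.Ico i0 j0).filter
          (fun t => f t = f i0 ∧ f (t + 1) = f (i0 + 1)) :=
        Finset.mem_filter.mpr ⟨Finset.mem_Ico.mpr ⟨le_refl _, hij⟩, rfl, rfl⟩
      have h1 : 0 < a (f i0) (f (i0 + 1)) := Finset.card_pos.mpr ⟨i0, hmem⟩
      have h2 : a (f i0) (f (i0 + 1)) ≤ ∑ u, a (f i0) u :=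
        Finset.single_le_sum (fun _ _ => Nat.zero_le _) (mem_univ _)
      have h3 : ∑ u, a (f i0) u ≤ ∑ v, ∑ u, a v u :=
        Finset.single_le_sum (f := fun v => ∑ u, a v u)
          (fun _ _ => Nat.zero_le _) (mem_univ _)
      omega
    exact ⟨a, hadiag, abound, abal, apos⟩
/-- Eulerian-orientation lemma: a loopless symmetric multigraph with all
degrees even admits a balanced orientation. -/
lemma orient {n : ℕ} : ∀ (N : ℕ) (m0 : Fin n → Fin n → ℕ), (∑ v, ∑ u, m0 v u = N) →
    (∀ v, m0 v v = 0) → (∀ u v, m0 u v = m0 v u) → (∀ v, Even (∑ u, m0 v u)) →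
    ∃ d : Fin n → Fin n → ℕ, (∀ v, d v v = 0) ∧ (∀ u v, d u v + d v u = m0 u v) ∧
      (∀ v, ∑ u, d v u = ∑ u, d u v) := by
  intro N
  induction N using Nat.strong_induction_on with
  | _ N ih =>
    intro m0 hN hdiag hsym heven
    rcases Nat.eq_zero_or_pos N with h0 | hpos
    · subst h0
      have hz : ∀ v u, m0 v u = 0 := by
        intro v u
        have h1 := Finset.sum_eq_zero_iff.mp hN v (mem_univ v)
        exact Finset.sum_eq_zero_iff.mp h1 u (mem_univ u)
      exact ⟨fun _ _ => 0, fun _ => rfl, fun u v => by simp [hz u v], fun _ => rfl⟩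
    · obtain ⟨a, hadiag, habound, habal, hapos⟩ :=
        exists_step m0 hdiag hsym heven (by omega)
      set m1 : Fin n → Fin n → ℕ := fun u v => m0 u v - (a u v + a v u) with hm1
      have hrow1 : ∀ v, ∑ u, m1 v u = ∑ u, m0 v u - (∑ u, a v u + ∑ u, a u v) := by
        intro v
        rw [show ∑ u, m1 v u = ∑ u, (m0 v u - (a v u + a u v)) from rfl,
          Finset.sum_tsub_distrib _ (fun u _ => habound v u), Finset.sum_add_distrib]
      have hle : ∀ v, ∑ u, a v u + ∑ u, a u v ≤ ∑ u, m0 v u := by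
        intro v
        rw [← Finset.sum_add_distrib]
        exact Finset.sum_le_sum fun u _ => habound v u
      have htot1 : ∑ v, ∑ u, m1 v u
          = N - ∑ v, (∑ u, a v u + ∑ u, a u v) := by
        rw [← hN, ← Finset.sum_tsub_distrib _ (fun v _ => hle v)]
        exact Finset.sum_congr rfl fun v _ => hrow1 v
      have hapos' : 0 < ∑ v, (∑ u, a v u + ∑ u, a u v) := by
        have h1 : ∑ v, ∑ u, a v u ≤ ∑ v, (∑ u, a v u + ∑ u, a u v) :=
          Finset.sum_le_sum fun v _ => Nat.le_add_right _ _
        omega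
      have hlt : ∑ v, ∑ u, m1 v u < N := by
        rw [htot1]
        exact Nat.sub_lt hpos hapos'
      obtain ⟨d1, hd1diag, hd1pair, hd1bal⟩ := ih (∑ v, ∑ u, m1 v u) hlt m1 rfl
        (fun v => by simp [m1, hdiag v])
        (fun u v => by
          show m0 u v - (a u v + a v u) = m0 v u - (a v u + a u v)
          rw [hsym u v, add_comm])
        (fun v => by
          rw [hrow1 v, habal v]
          obtain ⟨t, ht⟩ := heven v
          have := hle v
          rw [habal v] at this
          exact ⟨t - ∑ u, a u v, by omega⟩)
      refine ⟨fun u v => d1 u v + a u v, ?_, ?_, ?_⟩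
      · intro v
        show d1 v v + a v v = 0
        rw [hd1diag v, hadiag v]
      · intro u v
        show (d1 u v + a u v) + (d1 v u + a v u) = m0 u v
        have h1 := hd1pair u v
        have h2 : m1 u v = m0 u v - (a u v + a v u) := rfl
        have h3 := habound u v
        omega
      · intro v
        show ∑ u, (d1 v u + a v u) = ∑ u, (d1 u v + a u v)
        rw [Finset.sum_add_distrib, Finset.sum_add_distrib, hd1bal v, habal v]
end SFactorProof

open Finset SFactorProof in
/-- Case `r₁` even (`s = r₁ + 2r₂` even) in the projective-normality proof for
`T \\ SL_n/(P_{α₁} ∩ P_{α₂})`: a `ks`-regular general graph on `n` vertices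
(loops allowed, a loop contributing degree 1, so the degree of `v` is
`∑ u, m v u`) with exactly `k·n·r₁` loops has a spanning subgraph in which
every vertex has degree exactly `s`. -/
theorem s_factor_of_ks_regular (n k r1 r2 s : ℕ)
    (hn : 1 ≤ n) (hk : 1 ≤ k) (h1 : 1 ≤ r1) (h2 : 1 ≤ r2)
    (hs : s = r1 + 2 * r2) (hse : Even s)
    (m : Fin n → Fin n → ℕ) (hsym : ∀ u v, m u v = m v u)
    (hloops : ∑ v, m v v = k * n * r1)
    (hreg : ∀ v, ∑ u, m v u = k * s) :
    ∃ m' : Fin n → Fin n → ℕ,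
      (∀ u v, m' u v ≤ m u v) ∧ (∀ u v, m' u v = m' v u) ∧
      (∀ v, ∑ u, m' v u = s) := by
  classical
  obtain ⟨s2, hs2⟩ := hse
  have hks : k * s = k * s2 + k * s2 := by rw [hs2, Nat.mul_add]
  -- the odd-loop indicator
  set w : Fin n → ℕ := fun v => m v v % 2 with hwdef
  have hw1 : ∀ v, w v ≤ 1 := by
    intro v
    show m v v % 2 ≤ 1
    have : m v v % 2 < 2 := Nat.mod_lt _ (by norm_num)
    omega
  have hwle : ∀ v, w v ≤ m v v := fun v => Nat.mod_le _ _
  have hwev : Even (∑ v, w v) := by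
    have h1 : (∑ v, m v v) % 2 = (∑ v, w v) % 2 :=
      Finset.sum_nat_mod (univ : Finset (Fin n)) 2 (fun v => m v v)
    rw [hloops] at h1
    obtain ⟨r12, hr12⟩ : ∃ t, r1 = 2 * t := ⟨r1 / 2, by omega⟩
    have h2 : k * n * r1 = 2 * (k * n * r12) := by rw [hr12]; ring
    rw [h2, Nat.mul_mod_right] at h1
    rw [Nat.even_iff]
    omega
  obtain ⟨p, hpsym, hpdiag, hprow⟩ := pairing (∑ v, w v) w rfl hw1 hwev
  -- the modified graph (odd loops replaced by pairing edges)
  set mh : Fin n → Fin n → ℕ :=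
    fun v u => m v u + p v u - (if u = v then w v else 0) with hmh
  have hmhsym : ∀ u v, mh u v = mh v u := by
    intro u v
    rcases eq_or_ne u v with h | h
    · subst h; rfl
    · show m u v + p u v - (if v = u then w u else 0)
        = m v u + p v u - (if u = v then w v else 0)
      rw [if_neg (Ne.symm h), if_neg h, hsym u v, hpsym u v]
  have hmhvv : ∀ v, mh v v = m v v - w v := by
    intro v
    show m v v + p v v - (if v = v then w v else 0) = m v v - w v
    rw [hpdiag v, if_pos rfl, add_zero]
  have hmhoff : ∀ v u, u ≠ v → mh v u = m v u + p v u := by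
    intro v u h
    show m v u + p v u - (if u = v then w v else 0) = m v u + p v u
    rw [if_neg h]
    omega
  have hmhrow : ∀ v, ∑ u, mh v u = k * s := by
    intro v
    have hptle : ∀ u, (if u = v then w v else 0) ≤ m v u + p v u := by
      intro u
      by_cases h : u = v
      · subst h
        rw [if_pos rfl]
        have := hwle u
        omega
      · simp [h]
    rw [show ∑ u, mh v u = ∑ u, (m v u + p v u - (if u = v then w v else 0)) from rfl,
      Finset.sum_tsub_distrib _ (fun u _ => hptle u), Finset.sum_add_distrib, hreg v,
      hprow v, Finset.sum_ite_eq' univ v (fun _ => w v)]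
    simp only [mem_univ, if_pos]
    omega
  -- the loopless part
  set mh0 : Fin n → Fin n → ℕ := fun v u => if u = v then 0 else mh v u with hmh0
  have hmh0diag : ∀ v, mh0 v v = 0 := by intro v; simp [mh0]
  have hmh0sym : ∀ u v, mh0 u v = mh0 v u := by
    intro u v
    rcases eq_or_ne u v with h | h
    · subst h; rfl
    · show (if v = u then 0 else mh u v) = if u = v then 0 else mh v u
      rw [if_neg (Ne.symm h), if_neg h, hmhsym]
  have hrow0 : ∀ v, ∑ u, mh0 v u + (m v v - w v) = k * s := by
    intro v
    have hh1 : mh v v + ∑ u ∈ univ.erase v, mh v u = ∑ u, mh v u :=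
      Finset.add_sum_erase _ _ (mem_univ v)
    have hh2 : mh0 v v + ∑ u ∈ univ.erase v, mh0 v u = ∑ u, mh0 v u :=
      Finset.add_sum_erase _ _ (mem_univ v)
    have hh3 : ∑ u ∈ univ.erase v, mh0 v u = ∑ u ∈ univ.erase v, mh v u := by
      refine Finset.sum_congr rfl fun u hu => ?_
      show (if u = v then 0 else mh v u) = mh v u
      rw [if_neg (Finset.ne_of_mem_erase hu)]
    have hh4 := hmhrow v
    have hh5 := hmhvv v
    have hh6 := hmh0diag v
    omega
  have hdeg0even : ∀ v, Even (∑ u, mh0 v u) := by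
    intro v
    have hh := hrow0 v
    have hmod : w v = m v v % 2 := rfl
    rw [Nat.even_iff]
    omega
  obtain ⟨d0, hd0diag, hd0pair, hd0bal⟩ :=
    orient (∑ v, ∑ u, mh0 v u) mh0 rfl hmh0diag hmh0sym hdeg0even
  -- the bipartite double-regular matrix
  set D : Fin n → Fin n → ℕ := fun v u => d0 v u + (if u = v then m v v / 2 else 0) with hD
  have hpairsum : ∀ v, ∑ u, d0 v u + ∑ u, d0 u v = ∑ u, mh0 v u := by
    intro v
    rw [← Finset.sum_add_distrib]
    exact Finset.sum_congr rfl fun u _ => hd0pair v u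
  have hDrow : ∀ v, ∑ u, D v u = k * s2 := by
    intro v
    have hh1 : ∑ u, D v u = ∑ u, d0 v u + m v v / 2 := by
      rw [show ∑ u, D v u = ∑ u, (d0 v u + (if u = v then m v v / 2 else 0)) from rfl,
        Finset.sum_add_distrib, Finset.sum_ite_eq' univ v (fun _ => m v v / 2)]
      simp only [mem_univ, if_pos]
    have hh2 := hpairsum v
    have hh3 := hrow0 v
    have hh4 := hd0bal v
    have hh5 : w v = m v v % 2 := rfl
    omega
  have hDcol : ∀ v, ∑ u, D u v = k * s2 := by
    intro v
    have hh1 : ∑ u, D u v = ∑ u, d0 u v + m v v / 2 := by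
      rw [show ∑ u, D u v = ∑ u, (d0 u v + (if v = u then m u u / 2 else 0)) from rfl,
        Finset.sum_add_distrib]
      congr 1
      rw [Finset.sum_ite_eq univ v (fun u => m u u / 2)]
      simp only [mem_univ, if_pos]
    have hh2 := hpairsum v
    have hh3 := hrow0 v
    have hh4 := hd0bal v
    have hh5 : w v = m v v % 2 := rfl
    omega
  obtain ⟨C, hCle, hCrow, hCcol⟩ := extract s2 (k * s2) D
    (Nat.le_mul_of_pos_left s2 (by omega)) hDrow hDcol
  -- bounds on the symmetrized matching sum
  have hbound_off : ∀ v u, u ≠ v → C v u + C u v ≤ m v u + p v u := by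
    intro v u h
    have hb1 : C v u ≤ D v u := hCle v u
    have hb2 : C u v ≤ D u v := hCle u v
    have hb3 : D v u = d0 v u := by
      show d0 v u + (if u = v then m v v / 2 else 0) = d0 v u
      rw [if_neg h, add_zero]
    have hb4 : D u v = d0 u v := by
      show d0 u v + (if v = u then m u u / 2 else 0) = d0 u v
      rw [if_neg (Ne.symm h), add_zero]
    have hb5 := hd0pair v u
    have hb6 : mh0 v u = mh v u := if_neg h
    have hb7 := hmhoff v u h
    omega
  have hbound_diag : ∀ v, C v v + C v v ≤ m v v - w v := by
    intro v
    have hb1 : C v v ≤ D v v := hCle v v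
    have hb2 : D v v = m v v / 2 := by
      show d0 v v + (if v = v then m v v / 2 else 0) = m v v / 2
      rw [hd0diag v, if_pos rfl, zero_add]
    have hb3 : w v = m v v % 2 := rfl
    omega
  -- the final subgraph
  refine ⟨fun a b => if b = a then
      (C a a + C a a) + ∑ x, (if x = a then 0 else C a x + C x a - m a x)
    else min (C a b + C b a) (m a b), ?_, ?_, ?_⟩
  · intro u v
    beta_reduce
    rcases eq_or_ne v u with h | h
    · subst h
      rw [if_pos rfl]
      have hexle : ∀ x, (if x = v then 0 else C v x + C x v - m v x) ≤ p v x := by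
        intro x
        by_cases hx : x = v
        · simp [hx]
        · rw [if_neg hx]
          have := hbound_off v x hx
          omega
      have hsums : ∑ x, (if x = v then 0 else C v x + C x v - m v x) ≤ ∑ x, p v x :=
        Finset.sum_le_sum fun x _ => hexle x
      rw [hprow v] at hsums
      have := hbound_diag v
      have := hwle v
      omega
    · rw [if_neg h]
      exact min_le_right _ _
  · intro u v
    beta_reduce
    rcases eq_or_ne v u with h | h
    · subst h; rfl
    · rw [if_neg h, if_neg (Ne.symm h), hsym u v, add_comm (C u v) (C v u)]
  · intro v
    beta_reduce
    rw [← Finset.add_sum_erase _ _ (mem_univ v)]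
    have hdiagval : (if v = v then
        (C v v + C v v) + ∑ x, (if x = v then 0 else C v x + C x v - m v x)
      else min (C v v + C v v) (m v v))
        = (C v v + C v v) + ∑ x ∈ univ.erase v, (C v x + C x v - m v x) := by
      rw [if_pos rfl]
      congr 1
      rw [← Finset.add_sum_erase _ (fun x => if x = v then 0 else C v x + C x v - m v x)
        (mem_univ v), if_pos rfl, zero_add]
      exact Finset.sum_congr rfl fun x hx => if_neg (Finset.ne_of_mem_erase hx)
    rw [hdiagval]
    have hoffval : ∑ u ∈ univ.erase v, (if u = v then
        (C v v + C v v) + ∑ x, (if x = v then 0 else C v x + C x v - m v x)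
      else min (C v u + C u v) (m v u))
        = ∑ u ∈ univ.erase v, min (C v u + C u v) (m v u) :=
      Finset.sum_congr rfl fun u hu => if_neg (Finset.ne_of_mem_erase hu)
    rw [hoffval]
    have hkey : ∑ u ∈ univ.erase v, ((C v u + C u v - m v u) + min (C v u + C u v) (m v u))
        = ∑ u ∈ univ.erase v, (C v u + C u v) := by
      refine Finset.sum_congr rfl fun u hu => ?_
      rcases le_total (C v u + C u v) (m v u) with h | h
      · rw [min_eq_left h]; omega
      · rw [min_eq_right h]; omega
    have hsplit : (C v v + C v v) + ∑ u ∈ univ.erase v, (C v u + C u v) = ∑ u, (C v u + C u v) :=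
      Finset.add_sum_erase _ (fun u => C v u + C u v) (mem_univ v)
    have htot : ∑ u, (C v u + C u v) = s := by
      rw [Finset.sum_add_distrib, hCrow v, hCcol v, hs2]
    have hfin : ∑ u ∈ univ.erase v, (C v u + C u v - m v u)
        + ∑ u ∈ univ.erase v, min (C v u + C u v) (m v u)
        = ∑ u ∈ univ.erase v, (C v u + C u v) := by
      rw [← Finset.sum_add_distrib]
      exact hkey
    omega
end
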